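/- arXiv:2201.00468 — 6 statements merged into one kernel-verified Lean document; each statement's English description precedes it below -/
import Mathlib

section
/- Double-robust representation of the mean (equation (8) of the paper): Let π*: 𝒳 → (c, 1−c) and m*: 𝒳 → ℝ be measurable with E[|m*(X)|] < ∞. If either π*(X) = π(X) almost surely or m*(X) = m(X) almost surely (but not necessarily both), then E[m*(X)] + E[π*(X)^{−1} T (Y − m*(X))] = μ0. -/
/-!
Conditioning on `σ(X)`, unconfoundedness factorises `E[T Y | X] = π(X) m(X)`, and `π*(X)⁻¹`,
`m*(X)` pull out of the conditional expectation, so the inverse-propensity term has the same mean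
as `π*(X)⁻¹ π(X) (m(X) - m*(X))`. If `π* = π` this is `m(X) - m*(X)`, of mean `μ0 - E[m*(X)]`;
if `m* = m` it vanishes and `E[m*(X)] = E[m(X)] = μ0`.
-/

open MeasureTheory ProbabilityTheory

section ConditionalExpectation

variable {Ω : Type*} {m mΩ : MeasurableSpace Ω} {μ : Measure Ω}

theorem ProbabilityTheory.CondIndepFun.condExp_mul_ae_eq [StandardBorelSpace Ω]
    [IsFiniteMeasure μ] {hm : m ≤ mΩ} {T Y : Ω → ℝ} (h : CondIndepFun m hm T Y μ)
    (hT : Measurable T) (hY : Measurable Y)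
    (hTi : Integrable T μ) (hYi : Integrable Y μ) (hTYi : Integrable (T * Y) μ) :
    μ[T * Y | m] =ᵐ[μ] μ[T | m] * μ[Y | m] := by
  -- `ℝ × ℝ` is countably generated, so a single null set serves all pairs of events.
  have h_indep : ∀ᵐ ω ∂μ, IndepFun T Y (condExpKernel μ m ω) := by
    filter_upwards [ae_of_ae_trim hm ((condIndepFun_iff_map_prod_eq_prod_map_map hT hY).1 h)]
      with ω hω
    rw [indepFun_iff_map_prod_eq_prod_map_map hT.aemeasurable hY.aemeasurable]
    simpa only [Kernel.map_apply _ (hT.prodMk hY), Kernel.prod_apply, Kernel.map_apply _ hT,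
      Kernel.map_apply _ hY] using hω
  filter_upwards [h_indep, condExp_ae_eq_integral_condExpKernel hm hTYi,
    condExp_ae_eq_integral_condExpKernel hm hTi, condExp_ae_eq_integral_condExpKernel hm hYi]
    with ω h_indep_ω hTY_ω hT_ω hY_ω
  rw [Pi.mul_apply, hTY_ω, hT_ω, hY_ω]
  exact h_indep_ω.integral_mul_eq_mul_integral hT.aestronglyMeasurable hY.aestronglyMeasurable

theorem condExp_mul_sub_ae_eq {T Y f : Ω → ℝ} (hf : StronglyMeasurable[m] f)
    (hTi : Integrable T μ) (hTYi : Integrable (T * Y) μ) (hfTi : Integrable (f * T) μ)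
    (h_prod : μ[T * Y | m] =ᵐ[μ] μ[T | m] * μ[Y | m]) :
    μ[T * (Y - f) | m] =ᵐ[μ] μ[T | m] * (μ[Y | m] - f) := by
  have h_split : T * (Y - f) = T * Y - f * T := by ring
  filter_upwards [h_split ▸ condExp_sub hTYi hfTi m, h_prod,
    condExp_mul_of_stronglyMeasurable_left hf hfTi hTi] with ω h_sub_ω h_prod_ω h_pull_ω
  simp only [Pi.sub_apply, Pi.mul_apply] at h_sub_ω h_prod_ω h_pull_ω ⊢
  rw [h_sub_ω, h_prod_ω, h_pull_ω]
  ring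

theorem integral_mul_mul_sub_eq_integral_mul_condExp [IsFiniteMeasure μ] (hm : m ≤ mΩ)
    {g T Y f : Ω → ℝ} {Cg CT : ℝ} (hg : StronglyMeasurable[m] g) (hgb : ∀ ω, ‖g ω‖ ≤ Cg)
    (hT : AEStronglyMeasurable T μ) (hTb : ∀ ω, ‖T ω‖ ≤ CT)
    (hYi : Integrable Y μ) (hf : StronglyMeasurable[m] f) (hfi : Integrable f μ)
    (h_prod : μ[T * Y | m] =ᵐ[μ] μ[T | m] * μ[Y | m]) :
    ∫ ω, g ω * T ω * (Y ω - f ω) ∂μ = ∫ ω, g ω * ((μ[T | m]) ω * ((μ[Y | m]) ω - f ω)) ∂μ := by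
  have hTb' : ∀ᵐ ω ∂μ, ‖T ω‖ ≤ CT := .of_forall hTb
  have hTi : Integrable T μ := (integrable_const CT).mono' hT hTb'
  have hTYfi : Integrable (T * (Y - f)) μ := (hYi.sub hfi).bdd_mul hT hTb'
  have hgTYfi : Integrable (g * (T * (Y - f))) μ :=
    hTYfi.bdd_mul (hg.mono hm).aestronglyMeasurable (.of_forall hgb)
  calc ∫ ω, g ω * T ω * (Y ω - f ω) ∂μ = ∫ ω, (μ[g * (T * (Y - f)) | m]) ω ∂μ := by
        simp_rw [integral_condExp hm, Pi.mul_apply, Pi.sub_apply, mul_assoc]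
    _ = ∫ ω, g ω * ((μ[T | m]) ω * ((μ[Y | m]) ω - f ω)) ∂μ := by
        refine integral_congr_ae ?_
        filter_upwards [condExp_mul_of_stronglyMeasurable_left hg hgTYfi hTYfi,
          condExp_mul_sub_ae_eq hf hTi (hYi.bdd_mul hT hTb') (hfi.mul_bdd hT hTb') h_prod]
          with ω h_pull_ω h_res_ω
        rw [h_pull_ω, Pi.mul_apply, h_res_ω]
        rfl

end ConditionalExpectation

theorem dr_representation_mean_general
    {Ω : Type*} [MeasurableSpace Ω] [StandardBorelSpace Ω]
    (μ : Measure Ω) [IsProbabilityMeasure μ]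
    {𝒳 : Type*} [MeasurableSpace 𝒳]
    (Y T : Ω → ℝ) (X : Ω → 𝒳)
    (hY : Measurable Y) (hT : Measurable T) (hX : Measurable X)
    -- Y is square integrable
    (hYsq : MemLp Y 2 μ)
    -- T is a binary treatment indicator
    (hT01 : ∀ ω, T ω = 0 ∨ T ω = 1)
    -- unconfoundedness: T ⫫ Y | X
    (hunconf : CondIndepFun (MeasurableSpace.comap X inferInstance) hX.comap_le T Y μ)
    -- positivity of the propensity score π(X) := E[T | X]
    (c : ℝ) (hc : c ∈ Set.Ioo (0 : ℝ) 1)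
    -- working nuisance functions
    (πs ms : 𝒳 → ℝ) (hπs : Measurable πs) (hms : Measurable ms)
    (hπsRange : ∀ x, πs x ∈ Set.Ioo c (1 - c))
    (hmsInt : Integrable (fun ω => ms (X ω)) μ)
    -- double robustness: either π* = π a.s. or m* = m a.s. (not necessarily both)
    (hdr : ((fun ω => πs (X ω)) =ᵐ[μ] μ[T | MeasurableSpace.comap X inferInstance])
        ∨ ((fun ω => ms (X ω)) =ᵐ[μ] μ[Y | MeasurableSpace.comap X inferInstance])) :
    (∫ ω, ms (X ω) ∂μ) + (∫ ω, (πs (X ω))⁻¹ * T ω * (Y ω - ms (X ω)) ∂μ)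
      = ∫ ω, Y ω ∂μ := by
  set 𝒢 : MeasurableSpace Ω := MeasurableSpace.comap X inferInstance
  have hπs_pos (x : 𝒳) : 0 < πs x := hc.1.trans (hπsRange x).1
  have hπs_inv_le (x : 𝒳) : ‖(πs x)⁻¹‖ ≤ c⁻¹ := by
    rw [norm_inv, Real.norm_of_nonneg (hπs_pos x).le]
    exact inv_anti₀ hc.1 (hπsRange x).1.le
  have hT_le (ω : Ω) : ‖T ω‖ ≤ 1 := by rcases hT01 ω with h | h <;> simp [h]
  have hYi : Integrable Y μ := hYsq.integrable one_le_two
  have h_prod := hunconf.condExp_mul_ae_eq hT hY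
    ((integrable_const 1).mono' hT.aestronglyMeasurable (.of_forall hT_le)) hYi
    (hYi.bdd_mul hT.aestronglyMeasurable (.of_forall hT_le))
  rw [integral_mul_mul_sub_eq_integral_mul_condExp (g := fun ω => (πs (X ω))⁻¹)
    (f := fun ω => ms (X ω)) hX.comap_le (hπs.inv.comp (comap_measurable X)).stronglyMeasurable
    (fun ω => hπs_inv_le (X ω)) hT.aestronglyMeasurable hT_le hYi
    (hms.comp (comap_measurable X)).stronglyMeasurable hmsInt h_prod]
  rcases hdr with hπ | hm
  · have h_cancel : (fun ω => (πs (X ω))⁻¹ * ((μ[T | 𝒢]) ω * ((μ[Y | 𝒢]) ω - ms (X ω))))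
        =ᵐ[μ] fun ω => (μ[Y | 𝒢]) ω - ms (X ω) := by
      filter_upwards [hπ] with ω hπ_ω
      rw [← hπ_ω, inv_mul_cancel_left₀ (hπs_pos (X ω)).ne']
    rw [integral_congr_ae h_cancel, integral_sub integrable_condExp hmsInt,
      integral_condExp hX.comap_le]
    ring
  · have h_vanish : (fun ω => (πs (X ω))⁻¹ * ((μ[T | 𝒢]) ω * ((μ[Y | 𝒢]) ω - ms (X ω))))
        =ᵐ[μ] 0 := by
      filter_upwards [hm] with ω hm_ω
      simp [← hm_ω]
    rw [integral_congr_ae h_vanish, integral_congr_ae hm, integral_condExp hX.comap_le]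
    simp

theorem dr_representation_mean
    {Ω : Type*} [MeasurableSpace Ω] [StandardBorelSpace Ω]
    (μ : Measure Ω) [IsProbabilityMeasure μ]
    {𝒳 : Type*} [MeasurableSpace 𝒳]
    (Y T : Ω → ℝ) (X : Ω → 𝒳)
    (hY : Measurable Y) (hT : Measurable T) (hX : Measurable X)
    -- Y is square integrable
    (hYsq : MemLp Y 2 μ)
    -- T is a binary treatment indicator
    (hT01 : ∀ ω, T ω = 0 ∨ T ω = 1)
    -- unconfoundedness: T ⫫ Y | X
    (hunconf : CondIndepFun (MeasurableSpace.comap X inferInstance) hX.comap_le T Y μ)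
    -- positivity of the propensity score π(X) := E[T | X]
    (c : ℝ) (hc : c ∈ Set.Ioo (0 : ℝ) 1)
    (hpos : ∀ᵐ ω ∂μ,
      (μ[T | MeasurableSpace.comap X inferInstance]) ω ∈ Set.Ioo c (1 - c))
    -- working nuisance functions
    (πs ms : 𝒳 → ℝ) (hπs : Measurable πs) (hms : Measurable ms)
    (hπsRange : ∀ x, πs x ∈ Set.Ioo c (1 - c))
    (hmsInt : Integrable (fun ω => ms (X ω)) μ)
    -- double robustness: either π* = π a.s. or m* = m a.s. (not necessarily both)
    (hdr : ((fun ω => πs (X ω)) =ᵐ[μ] μ[T | MeasurableSpace.comap X inferInstance])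
        ∨ ((fun ω => ms (X ω)) =ᵐ[μ] μ[Y | MeasurableSpace.comap X inferInstance])) :
    (∫ ω, ms (X ω) ∂μ) + (∫ ω, (πs (X ω))⁻¹ * T ω * (Y ω - ms (X ω)) ∂μ)
      = ∫ ω, Y ω ∂μ :=
  dr_representation_mean_general μ Y T X hY hT hX hYsq hT01 hunconf c hc πs ms hπs hms hπsRange
    hmsInt hdr
end

section
/- (Efficiency gain of the SS ATE estimator, equation (15)) Let 𝒢 be a sub-σ-algebra of the σ-algebra generated by X and set m*(X) := E[Y | 𝒢]. With λ²_SS := Var(π(X)^{−1}T(Y − m*(X))) and λ²_SUP := Var(π(X)^{−1}T(Y − m*(X)) + m*(X)), one has λ²_SS = λ²_SUP − 2E[m*(X)(Y − μ0)] + Var(m*(X)) = λ²_SUP − Var(m*(X)); in particular λ²_SS ≤ λ²_SUP. -/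
/-!
Write `π = E[T | X]`, `m* = E[Y | 𝒢]` and `W = π⁻¹ T (Y - m*)`. Conditional independence of `T`
and `Y` given `X` factorises `E[T Y | X] = π E[Y | X]`, so `E[W | X] = E[Y | X] - m*`, and
conditioning further on `𝒢 ≤ σ(X)` gives `E[W | 𝒢] = 0`. Hence `W` is uncorrelated with the
`𝒢`-measurable `m*` and `Var(W + m*) = Var W + Var m*`. Finally
`E[m* (Y - μ0)] = Cov(m*, Y) = Var m*`, because `Y - m*` is also orthogonal to `𝒢`.
-/

open MeasureTheory ProbabilityTheory Set
open scoped ENNReal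

section L2

variable {Ω : Type*} {m mΩ : MeasurableSpace Ω} {μ : Measure Ω} [IsProbabilityMeasure μ]

theorem integral_mul_sub_integral_eq_covariance {X Y : Ω → ℝ} (hX : MemLp X 2 μ)
    (hY : MemLp Y 2 μ) : ∫ ω, X ω * (Y ω - μ[Y]) ∂μ = cov[X, Y; μ] := by
  simp_rw [covariance_eq_sub hX hY, mul_sub]
  rw [integral_sub (f := fun ω ↦ X ω * Y ω) (hX.integrable_mul hY)
    ((hX.integrable one_le_two).mul_const _), integral_mul_const]
  rfl

theorem covariance_eq_zero_of_condExp_eq_zero (hm : m ≤ mΩ) {W Z : Ω → ℝ} (hW : MemLp W 2 μ)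
    (hZ : MemLp Z 2 μ) (hZm : StronglyMeasurable[m] Z) (hW0 : μ[W | m] =ᵐ[μ] 0) :
    cov[W, Z; μ] = 0 := by
  have h_mean : μ[W] = 0 := by
    rw [← integral_condExp hm, integral_congr_ae hW0, integral_zero']
  have h_prod : μ[W * Z] = 0 := by
    rw [← integral_condExp hm, integral_congr_ae (condExp_mul_of_stronglyMeasurable_right hZm
      (hW.integrable_mul hZ) (hW.integrable one_le_two))]
    refine integral_eq_zero_of_ae ?_
    filter_upwards [hW0] with ω hω
    simp [hω]
  rw [covariance_eq_sub hW hZ, h_mean, h_prod]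
  ring

theorem covariance_condExp_left_eq_variance (hm : m ≤ mΩ) {Y : Ω → ℝ} (hY : MemLp Y 2 μ) :
    cov[μ[Y | m], Y; μ] = Var[μ[Y | m]; μ] := by
  have hmY : MemLp (μ[Y | m]) 2 μ := hY.condExp one_le_two
  have h_res : μ[Y - μ[Y | m] | m] =ᵐ[μ] 0 := by
    filter_upwards [condExp_sub (hY.integrable one_le_two) (integrable_condExp (m := m) (f := Y))
      m, condExp_condExp_of_le (f := Y) le_rfl hm] with ω h_sub h_idem
    simp [h_sub, h_idem]
  have h_orth : cov[μ[Y | m], Y - μ[Y | m]; μ] = 0 := by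
    rw [covariance_comm]
    exact covariance_eq_zero_of_condExp_eq_zero hm (hY.sub hmY) hmY stronglyMeasurable_condExp h_res
  rw [covariance_sub_right hmY hY hmY, covariance_self hmY.aemeasurable] at h_orth
  linarith

end L2

theorem memLp_top_inv_of_ae_lt {Ω : Type*} {mΩ : MeasurableSpace Ω} {μ : Measure Ω} {f : Ω → ℝ}
    {c : ℝ} (hc : 0 < c) (hf : Measurable f) (hcf : ∀ᵐ ω ∂μ, c < f ω) :
    MemLp (fun ω ↦ (f ω)⁻¹) ∞ μ := by
  refine memLp_top_of_bound hf.inv.aestronglyMeasurable c⁻¹ ?_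
  filter_upwards [hcf] with ω hω
  rw [norm_inv, Real.norm_of_nonneg (hc.trans hω).le]
  exact inv_anti₀ hc hω.le

theorem condExp_eq_zero_of_condExp_eq_condExp_sub {Ω : Type*} {m₁ m₂ mΩ : MeasurableSpace Ω}
    {μ : Measure Ω} [IsFiniteMeasure μ] (hm₁₂ : m₁ ≤ m₂) (hm₂ : m₂ ≤ mΩ) {W Y : Ω → ℝ}
    (hW : μ[W | m₂] =ᵐ[μ] μ[Y | m₂] - μ[Y | m₁]) : μ[W | m₁] =ᵐ[μ] 0 := by
  calc μ[W | m₁] =ᵐ[μ] μ[μ[W | m₂] | m₁] := (condExp_condExp_of_le hm₁₂ hm₂).symm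
    _ =ᵐ[μ] μ[μ[Y | m₂] - μ[Y | m₁] | m₁] := condExp_congr_ae hW
    _ =ᵐ[μ] μ[μ[Y | m₂] | m₁] - μ[μ[Y | m₁] | m₁] :=
        condExp_sub integrable_condExp integrable_condExp m₁
    _ =ᵐ[μ] μ[Y | m₁] - μ[Y | m₁] :=
        (condExp_condExp_of_le hm₁₂ hm₂).sub (condExp_condExp_of_le le_rfl (hm₁₂.trans hm₂))
    _ = 0 := sub_self _

/-- The countable π-system of rational half-lines turns the set-by-set null sets of kernel
independence into a single one. -/
theorem ProbabilityTheory.Kernel.IndepFun.ae_indepFun {α Ω : Type*} {mα : MeasurableSpace α}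
    {mΩ : MeasurableSpace Ω} {κ : Kernel α Ω} [IsMarkovKernel κ] {μ : Measure α} {f g : Ω → ℝ}
    (hf : Measurable f) (hg : Measurable g) (h : Kernel.IndepFun f g κ μ) :
    ∀ᵐ a ∂μ, ProbabilityTheory.IndepFun f g (κ a) := by
  have h_rat : ∀ᵐ a ∂μ, ∀ q r : ℚ,
      κ a (f ⁻¹' Iic (q : ℝ) ∩ g ⁻¹' Iic (r : ℝ))
        = κ a (f ⁻¹' Iic (q : ℝ)) * κ a (g ⁻¹' Iic (r : ℝ)) := by
    simp only [ae_all_iff]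
    exact fun q r ↦ (Kernel.indepFun_iff_measure_inter_preimage_eq_mul.1 h) _ _
      measurableSet_Iic measurableSet_Iic
  have h_gen : ∀ {φ : Ω → ℝ}, MeasurableSpace.comap φ inferInstance
      = .generateFrom ((fun s ↦ φ ⁻¹' s) '' ⋃ a : ℚ, {Iic (a : ℝ)}) := by
    intro φ
    rw [BorelSpace.measurable_eq (α := ℝ), Real.borel_eq_generateFrom_Iic_rat,
      MeasurableSpace.comap_generateFrom]
  filter_upwards [h_rat] with a ha
  refine ProbabilityTheory.IndepSets.indep hf.comap_le hg.comap_le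
    (Real.isPiSystem_Iic_rat.comap f) (Real.isPiSystem_Iic_rat.comap g) h_gen h_gen ?_
  rintro _ _ ⟨s, hs, rfl⟩ ⟨t, ht, rfl⟩
  simp only [mem_iUnion, mem_singleton_iff] at hs ht
  obtain ⟨q, rfl⟩ := hs
  obtain ⟨r, rfl⟩ := ht
  exact Filter.Eventually.of_forall fun _ ↦ ha q r

section ConditionalIndependence

variable {Ω : Type*} {m mΩ : MeasurableSpace Ω} [StandardBorelSpace Ω]
  {μ : Measure Ω} [IsFiniteMeasure μ]

theorem ProbabilityTheory.CondIndepFun.condExp_mul {hm : m ≤ mΩ} {f g : Ω → ℝ}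
    (h : CondIndepFun m hm f g μ) (hf : Measurable f) (hg : Measurable g)
    (hfi : Integrable f μ) (hgi : Integrable g μ) (hfgi : Integrable (f * g) μ) :
    μ[f * g | m] =ᵐ[μ] μ[f | m] * μ[g | m] := by
  have h_indep : ∀ᵐ ω ∂μ, IndepFun f g (condExpKernel μ m ω) :=
    ae_of_ae_trim hm (Kernel.IndepFun.ae_indepFun hf hg h)
  filter_upwards [condExp_ae_eq_integral_condExpKernel hm hfgi,
    condExp_ae_eq_integral_condExpKernel hm hfi, condExp_ae_eq_integral_condExpKernel hm hgi,
    h_indep] with ω hfg_ω hf_ω hg_ω h_ω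
  rw [hfg_ω, Pi.mul_apply, hf_ω, hg_ω]
  exact h_ω.integral_mul_eq_mul_integral hf.aestronglyMeasurable hg.aestronglyMeasurable

theorem ProbabilityTheory.CondIndepFun.condExp_inv_condExp_mul_mul_sub {hm : m ≤ mΩ}
    {T Y g : Ω → ℝ} (h : CondIndepFun m hm T Y μ) (hT : Measurable T) (hY : Measurable Y)
    (hT_top : MemLp T ∞ μ) (hYi : Integrable Y μ)
    (hπ_inv : MemLp (fun ω ↦ (μ[T | m] ω)⁻¹) ∞ μ) (hπ : ∀ᵐ ω ∂μ, μ[T | m] ω ≠ 0)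
    (hg : StronglyMeasurable[m] g) (hgi : Integrable g μ) :
    μ[fun ω ↦ (μ[T | m] ω)⁻¹ * T ω * (Y ω - g ω) | m] =ᵐ[μ] μ[Y | m] - g := by
  have hTi : Integrable T μ := hT_top.integrable le_top
  have hTY : Integrable (T * Y) μ := hYi.mul_of_top_right hT_top
  have hTg : Integrable (T * g) μ := hgi.mul_of_top_right hT_top
  have hπ_inv_meas : StronglyMeasurable[m] fun ω ↦ (μ[T | m] ω)⁻¹ :=
    stronglyMeasurable_condExp.measurable.inv.stronglyMeasurable
  have h_eq : (fun ω ↦ (μ[T | m] ω)⁻¹ * T ω * (Y ω - g ω))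
      = (fun ω ↦ (μ[T | m] ω)⁻¹) * (T * Y - T * g) := by
    ext ω; simp only [Pi.mul_apply, Pi.sub_apply]; ring
  rw [h_eq]
  filter_upwards [condExp_mul_of_stronglyMeasurable_left hπ_inv_meas
      ((hTY.sub hTg).mul_of_top_right hπ_inv) (hTY.sub hTg),
    condExp_sub hTY hTg m, h.condExp_mul hT hY hTi hYi hTY,
    condExp_mul_of_stronglyMeasurable_right hg hTg hTi, hπ] with ω h_pull h_sub h_indep h_g hπω
  simp only [Pi.mul_apply, Pi.sub_apply] at h_pull h_sub h_indep h_g ⊢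
  rw [h_pull, h_sub, h_indep, h_g]
  field_simp

end ConditionalIndependence

theorem ss_ate_efficiency_gain
    {Ω : Type*} [MeasurableSpace Ω] [StandardBorelSpace Ω]
    (μ : Measure Ω) [IsProbabilityMeasure μ]
    {𝒳 : Type*} [MeasurableSpace 𝒳]
    (Y T : Ω → ℝ) (X : Ω → 𝒳)
    (hY : Measurable Y) (hT : Measurable T) (hX : Measurable X)
    -- Y is square integrable
    (hYsq : MemLp Y 2 μ)
    -- T is a binary treatment indicator
    (hT01 : ∀ ω, T ω = 0 ∨ T ω = 1)
    -- unconfoundedness: T ⫫ Y | X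
    (hunconf : CondIndepFun (MeasurableSpace.comap X inferInstance) hX.comap_le T Y μ)
    -- positivity of the propensity score π(X) := E[T | X]
    (c : ℝ) (hc : c ∈ Set.Ioo (0 : ℝ) 1)
    (hpos : ∀ᵐ ω ∂μ,
      (μ[T | MeasurableSpace.comap X inferInstance]) ω ∈ Set.Ioo c (1 - c))
    -- 𝒢 is a sub-σ-algebra of σ(X); m*(X) := E[Y | 𝒢]
    (𝒢 : MeasurableSpace Ω) (h𝒢 : 𝒢 ≤ MeasurableSpace.comap X inferInstance) :
    (variance (fun ω =>
        ((μ[T | MeasurableSpace.comap X inferInstance]) ω)⁻¹ * T ω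
          * (Y ω - (μ[Y | 𝒢]) ω)) μ
      = variance (fun ω =>
          ((μ[T | MeasurableSpace.comap X inferInstance]) ω)⁻¹ * T ω
            * (Y ω - (μ[Y | 𝒢]) ω) + (μ[Y | 𝒢]) ω) μ
        - 2 * ∫ ω, (μ[Y | 𝒢]) ω * (Y ω - ∫ ω', Y ω' ∂μ) ∂μ
        + variance (fun ω => (μ[Y | 𝒢]) ω) μ)
    ∧ (variance (fun ω =>
        ((μ[T | MeasurableSpace.comap X inferInstance]) ω)⁻¹ * T ω
          * (Y ω - (μ[Y | 𝒢]) ω)) μ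
      = variance (fun ω =>
          ((μ[T | MeasurableSpace.comap X inferInstance]) ω)⁻¹ * T ω
            * (Y ω - (μ[Y | 𝒢]) ω) + (μ[Y | 𝒢]) ω) μ
        - variance (fun ω => (μ[Y | 𝒢]) ω) μ)
    ∧ variance (fun ω =>
        ((μ[T | MeasurableSpace.comap X inferInstance]) ω)⁻¹ * T ω
          * (Y ω - (μ[Y | 𝒢]) ω)) μ
      ≤ variance (fun ω =>
          ((μ[T | MeasurableSpace.comap X inferInstance]) ω)⁻¹ * T ω
            * (Y ω - (μ[Y | 𝒢]) ω) + (μ[Y | 𝒢]) ω) μ := by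
  set π := μ[T | MeasurableSpace.comap X inferInstance]
  set W := fun ω ↦ (π ω)⁻¹ * T ω * (Y ω - μ[Y | 𝒢] ω)
  have hT_top : MemLp T ∞ μ := memLp_top_of_bound hT.aestronglyMeasurable 1 <|
    .of_forall fun ω ↦ by rcases hT01 ω with h | h <;> simp [h]
  have hπ_pos : ∀ᵐ ω ∂μ, c < π ω := hpos.mono fun _ hω ↦ hω.1
  have hπ_inv_top : MemLp (fun ω ↦ (π ω)⁻¹) ∞ μ :=
    memLp_top_inv_of_ae_lt hc.1 (stronglyMeasurable_condExp.mono hX.comap_le).measurable hπ_pos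
  have hm2 : MemLp (μ[Y | 𝒢]) 2 μ := hYsq.condExp one_le_two
  have hW2 : MemLp W 2 μ := (hYsq.sub hm2).mul' (hT_top.mul' (r := ∞) hπ_inv_top)
  have hW0 : μ[W | 𝒢] =ᵐ[μ] 0 :=
    condExp_eq_zero_of_condExp_eq_condExp_sub h𝒢 hX.comap_le <|
      hunconf.condExp_inv_condExp_mul_mul_sub hT hY hT_top (hYsq.integrable one_le_two)
        hπ_inv_top (hπ_pos.mono fun _ hω ↦ (hc.1.trans hω).ne')
        (stronglyMeasurable_condExp.mono h𝒢) integrable_condExp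
  have h_cov : cov[W, μ[Y | 𝒢]; μ] = 0 :=
    covariance_eq_zero_of_condExp_eq_zero (h𝒢.trans hX.comap_le) hW2 hm2
      stronglyMeasurable_condExp hW0
  have h_cross : ∫ ω, μ[Y | 𝒢] ω * (Y ω - ∫ ω', Y ω' ∂μ) ∂μ = Var[μ[Y | 𝒢]; μ] :=
    (integral_mul_sub_integral_eq_covariance hm2 hYsq).trans
      (covariance_condExp_left_eq_variance (h𝒢.trans hX.comap_le) hYsq)
  have h_var_sum : Var[W + μ[Y | 𝒢]; μ] = Var[W; μ] + Var[μ[Y | 𝒢]; μ] := by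
    rw [variance_add hW2 hm2, h_cov]
    ring
  have h_var_nonneg := variance_nonneg (μ[Y | 𝒢]) μ
  have h_sum : (fun ω ↦ W ω + μ[Y | 𝒢] ω) = W + μ[Y | 𝒢] := rfl
  have h_eta : (fun ω ↦ μ[Y | 𝒢] ω) = μ[Y | 𝒢] := rfl
  rw [h_sum, h_eta]
  refine ⟨?_, ?_, ?_⟩ <;> linarith
end

section
/- (QTE efficiency gain) Let 𝒢 be a sub-σ-algebra of the σ-algebra generated by X and set φ*(X,θ0) := E[ψ(Y,θ0) | 𝒢]. With σ²_SS := Var(π(X)^{−1}T(ψ(Y,θ0) − φ*(X,θ0))) and σ²_SUP := Var(π(X)^{−1}T(φ*(X,θ0) − ψ(Y,θ0)) − φ*(X,θ0)), one has σ²_SUP − σ²_SS = 2E[φ*(X,θ0)ψ(Y,θ0)] − Var(φ*(X,θ0)) = E[φ*(X,θ0)²] ≥ 0. -/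
/-!
Write `π = E[T | σ(X)]`, `φ = E[ψ | 𝒢]` and `S = π⁻¹ T (ψ - φ)`; the supervised influence
function is `-(S + φ)`. Unconfoundedness makes `T` and `ψ` conditionally uncorrelated given
`σ(X)`, so `E[S | σ(X)] = E[ψ | σ(X)] - φ`. As `φ` is `σ(X)`-measurable, this gives
`E[S φ] = E[φ ψ] - E[φ²] = 0`, the last step being the projection property of `E[· | 𝒢]`.
Since also `E[φ] = E[ψ] = 0`, `S` and `φ` are uncorrelated and `Var(S + φ) = Var S + E[φ²]`.
-/

open MeasureTheory ProbabilityTheory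

section

variable {Ω : Type*} {m 𝒢 mΩ : MeasurableSpace Ω} {μ : Measure Ω}

lemma integral_mul_condExp_of_stronglyMeasurable_left [IsFiniteMeasure μ] (hm : m ≤ mΩ)
    {g f : Ω → ℝ} (hg : StronglyMeasurable[m] g) (hgf : Integrable (g * f) μ)
    (hf : Integrable f μ) :
    ∫ ω, g ω * f ω ∂μ = ∫ ω, g ω * (μ[f|m]) ω ∂μ :=
  (integral_condExp hm).symm.trans
    (integral_congr_ae (condExp_mul_of_stronglyMeasurable_left hg hgf hf))

lemma integral_condExp_mul_eq_integral_condExp_sq [IsFiniteMeasure μ] (hm : m ≤ mΩ)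
    {f : Ω → ℝ} (hf : MemLp f 2 μ) :
    ∫ ω, (μ[f|m]) ω * f ω ∂μ = ∫ ω, (μ[f|m]) ω ^ 2 ∂μ := by
  rw [integral_mul_condExp_of_stronglyMeasurable_left hm stronglyMeasurable_condExp
    ((hf.condExp one_le_two).integrable_mul hf) (hf.integrable one_le_two)]
  simp_rw [sq]

lemma condExp_mul_sub_const [IsFiniteMeasure μ] (hm : m ≤ mΩ) {f g : Ω → ℝ}
    (hf : Integrable f μ) (hg : Integrable g μ) (hfg : Integrable (f * g) μ)
    (h : μ[f * g|m] =ᵐ[μ] μ[f|m] * μ[g|m]) (a : ℝ) :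
    μ[f * (g - fun _ => a)|m] =ᵐ[μ] μ[f|m] * μ[g - fun _ => a|m] := by
  have hshift : μ[g - fun _ => a|m] =ᵐ[μ] μ[g|m] - fun _ => a := by
    filter_upwards [condExp_sub hg (integrable_const a) m] with ω hω
    rw [hω, Pi.sub_apply, condExp_const hm, Pi.sub_apply]
  have hexpand : f * (g - fun _ => a) = f * g - a • f := by
    ext ω; simp only [Pi.mul_apply, Pi.sub_apply, Pi.smul_apply, smul_eq_mul]; ring
  rw [hexpand]
  filter_upwards [condExp_sub hfg (hf.smul a) m, condExp_smul a f m, h, hshift]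
    with ω h₁ h₂ h₃ h₄
  simp only [h₁, Pi.sub_apply, h₂, h₃, Pi.mul_apply, h₄, Pi.smul_apply, smul_eq_mul]
  ring

lemma condExp_mul_indicator_of_condIndepFun [StandardBorelSpace Ω] [IsFiniteMeasure μ]
    (hm : m ≤ mΩ) {T Y : Ω → ℝ} (hT : Measurable T) (hY : Measurable Y)
    (hT01 : ∀ ω, T ω = 0 ∨ T ω = 1) (hind : CondIndepFun m hm T Y μ)
    {t : Set ℝ} (ht : MeasurableSet t) :
    μ[T * (Y ⁻¹' t).indicator 1|m] =ᵐ[μ] μ[T|m] * μ⟦Y ⁻¹' t | m⟧ := by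
  have hT_ind : T = (T ⁻¹' {1}).indicator 1 := by
    ext ω; rcases hT01 ω with h | h <;> simp [Set.indicator, h]
  rw [hT_ind, ← Set.inter_indicator_one]
  exact (condIndepFun_iff_condExp_inter_preimage_eq_mul hT hY).mp hind {1} t
    (measurableSet_singleton 1) ht

lemma memLp_top_inv_of_lt {f : Ω → ℝ} (hf : AEStronglyMeasurable f μ) {c : ℝ} (hc : 0 < c)
    (hfc : ∀ᵐ ω ∂μ, c < f ω) : MemLp (fun ω => (f ω)⁻¹) ⊤ μ := by
  refine memLp_top_of_bound hf.aemeasurable.inv.aestronglyMeasurable c⁻¹ ?_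
  filter_upwards [hfc] with ω hω
  rw [norm_inv, Real.norm_of_nonneg (hc.trans hω).le]
  exact inv_anti₀ hc hω.le

lemma variance_add_of_integral_mul_eq_zero [IsProbabilityMeasure μ] {U V : Ω → ℝ}
    (hU : MemLp U 2 μ) (hV : MemLp V 2 μ) (hV0 : ∫ ω, V ω ∂μ = 0)
    (hUV : ∫ ω, U ω * V ω ∂μ = 0) :
    Var[U + V; μ] = Var[U; μ] + ∫ ω, V ω ^ 2 ∂μ := by
  rw [variance_add hU hV, covariance_eq_sub hU hV,
    variance_of_integral_eq_zero hV.aestronglyMeasurable.aemeasurable hV0]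
  simp only [Pi.mul_apply, hUV, hV0]
  ring

lemma condExp_mul_sub_of_stronglyMeasurable {T ψ g : Ω → ℝ} (hg : StronglyMeasurable[m] g)
    (hT : Integrable T μ) (hTψ : Integrable (T * ψ) μ) (hgT : Integrable (g * T) μ)
    (hfact : μ[T * ψ|m] =ᵐ[μ] μ[T|m] * μ[ψ|m]) :
    μ[T * (ψ - g)|m] =ᵐ[μ] μ[T|m] * (μ[ψ|m] - g) := by
  rw [mul_sub, mul_comm T g]
  filter_upwards [condExp_sub hTψ hgT m, hfact,
    condExp_mul_of_stronglyMeasurable_left hg hgT hT] with ω h₁ h₂ h₃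
  simp only [h₁, Pi.sub_apply, h₂, h₃, Pi.mul_apply]
  ring

lemma integral_ipw_residual_mul_condExp_eq_zero [IsFiniteMeasure μ] (hm : m ≤ mΩ)
    (h𝒢 : 𝒢 ≤ m) {T ψ : Ω → ℝ} (hT : MemLp T ⊤ μ) (hψ : MemLp ψ ⊤ μ)
    {c : ℝ} (hc : 0 < c) (hpos : ∀ᵐ ω ∂μ, c < (μ[T|m]) ω)
    (hfact : μ[T * ψ|m] =ᵐ[μ] μ[T|m] * μ[ψ|m]) :
    ∫ ω, ((μ[T|m]) ω)⁻¹ * T ω * (ψ ω - (μ[ψ|𝒢]) ω) * (μ[ψ|𝒢]) ω ∂μ = 0 := by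
  set π := μ[T|m]
  set φ := μ[ψ|𝒢]
  have hφm : StronglyMeasurable[m] φ := stronglyMeasurable_condExp.mono h𝒢
  have hφ : MemLp φ ⊤ μ := hψ.condExp le_top
  have hψm : MemLp (μ[ψ|m]) ⊤ μ := hψ.condExp le_top
  have hres : MemLp (T * (ψ - φ)) ⊤ μ := (hψ.sub hφ).mul hT
  have hweight : MemLp (fun ω => (π ω)⁻¹ * φ ω) ⊤ μ :=
    hφ.mul' (memLp_top_inv_of_lt integrable_condExp.aestronglyMeasurable hc hpos)
  have hweight_m : StronglyMeasurable[m] (fun ω => (π ω)⁻¹ * φ ω) :=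
    (stronglyMeasurable_condExp.measurable.inv.mul hφm.measurable).stronglyMeasurable
  have hres_cond : μ[T * (ψ - φ)|m] =ᵐ[μ] π * (μ[ψ|m] - φ) :=
    condExp_mul_sub_of_stronglyMeasurable hφm (hT.integrable le_top)
      ((hψ.mul hT).integrable le_top) ((hT.mul hφ).integrable le_top) hfact
  calc ∫ ω, (π ω)⁻¹ * T ω * (ψ ω - φ ω) * φ ω ∂μ
      = ∫ ω, (π ω)⁻¹ * φ ω * (T * (ψ - φ)) ω ∂μ := by
        congr 1; ext ω; simp only [Pi.mul_apply, Pi.sub_apply]; ring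
    _ = ∫ ω, (π ω)⁻¹ * φ ω * (μ[T * (ψ - φ)|m]) ω ∂μ :=
        integral_mul_condExp_of_stronglyMeasurable_left hm hweight_m
          ((hres.mul hweight).integrable le_top) (hres.integrable le_top)
    _ = ∫ ω, (φ ω * (μ[ψ|m]) ω - φ ω * φ ω) ∂μ := by
        refine integral_congr_ae ?_
        filter_upwards [hres_cond, hpos] with ω hω hπω
        have : π ω ≠ 0 := (hc.trans hπω).ne'
        rw [hω, Pi.mul_apply, Pi.sub_apply]
        field_simp
    _ = ∫ ω, φ ω * ψ ω ∂μ - ∫ ω, φ ω ^ 2 ∂μ := by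
        have hφη : Integrable (fun ω => φ ω * (μ[ψ|m]) ω) μ :=
          (hψm.mul hφ).integrable le_top
        have hφφ : Integrable (fun ω => φ ω * φ ω) μ := (hφ.mul hφ).integrable le_top
        rw [integral_sub hφη hφφ,
          integral_mul_condExp_of_stronglyMeasurable_left hm hφm
            ((hψ.mul hφ).integrable le_top) (hψ.integrable le_top)]
        simp_rw [sq]
    _ = 0 := by
        rw [integral_condExp_mul_eq_integral_condExp_sq (h𝒢.trans hm)
          (hψ.mono_exponent le_top), sub_self]

theorem variance_ipw_sub_variance_ipw_eq_integral_sq [IsProbabilityMeasure μ] (hm : m ≤ mΩ)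
    (h𝒢 : 𝒢 ≤ m) {T ψ : Ω → ℝ} (hT : MemLp T ⊤ μ) (hψ : MemLp ψ ⊤ μ)
    (hψ0 : ∫ ω, ψ ω ∂μ = 0) {c : ℝ} (hc : 0 < c)
    (hpos : ∀ᵐ ω ∂μ, c < (μ[T|m]) ω) (hfact : μ[T * ψ|m] =ᵐ[μ] μ[T|m] * μ[ψ|m]) :
    Var[fun ω => ((μ[T|m]) ω)⁻¹ * T ω * ((μ[ψ|𝒢]) ω - ψ ω) - (μ[ψ|𝒢]) ω; μ]
      - Var[fun ω => ((μ[T|m]) ω)⁻¹ * T ω * (ψ ω - (μ[ψ|𝒢]) ω); μ]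
      = ∫ ω, ((μ[ψ|𝒢]) ω) ^ 2 ∂μ := by
  set π := μ[T|m]
  set φ := μ[ψ|𝒢]
  set SS : Ω → ℝ := fun ω => (π ω)⁻¹ * T ω * (ψ ω - φ ω)
  have hSUP : (fun ω => (π ω)⁻¹ * T ω * (φ ω - ψ ω) - φ ω) = -(SS + φ) := by
    ext ω; simp only [SS, Pi.neg_apply, Pi.add_apply]; ring
  have hφ : MemLp φ ⊤ μ := hψ.condExp le_top
  have hπinv : MemLp (fun ω => (π ω)⁻¹) ⊤ μ :=
    memLp_top_inv_of_lt integrable_condExp.aestronglyMeasurable hc hpos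
  have hπT : MemLp (fun ω => (π ω)⁻¹ * T ω) ⊤ μ := hT.mul' hπinv
  have hSS : MemLp SS ⊤ μ := (hψ.sub hφ).mul' hπT
  have hφ0 : ∫ ω, φ ω ∂μ = 0 := (integral_condExp (h𝒢.trans hm)).trans hψ0
  rw [hSUP, variance_neg, variance_add_of_integral_mul_eq_zero (hSS.mono_exponent le_top)
    (hφ.mono_exponent le_top) hφ0
    (integral_ipw_residual_mul_condExp_eq_zero hm h𝒢 hT hψ hc hpos hfact)]
  ring

end

theorem ss_qte_efficiency_gain
    {Ω : Type*} [MeasurableSpace Ω] [StandardBorelSpace Ω]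
    (μ : Measure Ω) [IsProbabilityMeasure μ]
    {𝒳 : Type*} [MeasurableSpace 𝒳]
    (Y T : Ω → ℝ) (X : Ω → 𝒳)
    (hY : Measurable Y) (hT : Measurable T) (hX : Measurable X)
    -- Y is square integrable
    (hYsq : MemLp Y 2 μ)
    -- T is a binary treatment indicator
    (hT01 : ∀ ω, T ω = 0 ∨ T ω = 1)
    -- unconfoundedness: T ⫫ Y | X
    (hunconf : CondIndepFun (MeasurableSpace.comap X inferInstance) hX.comap_le T Y μ)
    -- positivity of the propensity score π(X) := E[T | X]
    (c : ℝ) (hc : c ∈ Set.Ioo (0 : ℝ) 1)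
    (hpos : ∀ᵐ ω ∂μ,
      (μ[T | MeasurableSpace.comap X inferInstance]) ω ∈ Set.Ioo c (1 - c))
    -- quantile level and target quantile θ0 : E[ψ(Y,θ0)] = 0
    (τ : ℝ) (hτ : τ ∈ Set.Ioo (0 : ℝ) 1) (θ0 : ℝ)
    (hθ0 : ∫ ω, ((if Y ω < θ0 then (1 : ℝ) else 0) - τ) ∂μ = 0)
    -- 𝒢 a sub-σ-algebra of σ(X); φ* := E[ψ(Y,θ0) | 𝒢]
    (𝒢 : MeasurableSpace Ω) (h𝒢 : 𝒢 ≤ MeasurableSpace.comap X inferInstance) :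
    (variance (fun ω =>
          ((μ[T | MeasurableSpace.comap X inferInstance]) ω)⁻¹ * T ω
            * ((μ[fun ω' => (if Y ω' < θ0 then (1 : ℝ) else 0) - τ | 𝒢]) ω
                - ((if Y ω < θ0 then (1 : ℝ) else 0) - τ))
          - (μ[fun ω' => (if Y ω' < θ0 then (1 : ℝ) else 0) - τ | 𝒢]) ω) μ
      - variance (fun ω =>
          ((μ[T | MeasurableSpace.comap X inferInstance]) ω)⁻¹ * T ω
            * (((if Y ω < θ0 then (1 : ℝ) else 0) - τ)
                - (μ[fun ω' => (if Y ω' < θ0 then (1 : ℝ) else 0) - τ | 𝒢]) ω)) μ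
      = 2 * ∫ ω, (μ[fun ω' => (if Y ω' < θ0 then (1 : ℝ) else 0) - τ | 𝒢]) ω
              * ((if Y ω < θ0 then (1 : ℝ) else 0) - τ) ∂μ
        - variance (fun ω =>
            (μ[fun ω' => (if Y ω' < θ0 then (1 : ℝ) else 0) - τ | 𝒢]) ω) μ)
    ∧ (variance (fun ω =>
          ((μ[T | MeasurableSpace.comap X inferInstance]) ω)⁻¹ * T ω
            * ((μ[fun ω' => (if Y ω' < θ0 then (1 : ℝ) else 0) - τ | 𝒢]) ω
                - ((if Y ω < θ0 then (1 : ℝ) else 0) - τ))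
          - (μ[fun ω' => (if Y ω' < θ0 then (1 : ℝ) else 0) - τ | 𝒢]) ω) μ
      - variance (fun ω =>
          ((μ[T | MeasurableSpace.comap X inferInstance]) ω)⁻¹ * T ω
            * (((if Y ω < θ0 then (1 : ℝ) else 0) - τ)
                - (μ[fun ω' => (if Y ω' < θ0 then (1 : ℝ) else 0) - τ | 𝒢]) ω)) μ
      = ∫ ω, ((μ[fun ω' => (if Y ω' < θ0 then (1 : ℝ) else 0) - τ | 𝒢]) ω) ^ 2 ∂μ)
    ∧ 0 ≤ variance (fun ω =>
          ((μ[T | MeasurableSpace.comap X inferInstance]) ω)⁻¹ * T ω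
            * ((μ[fun ω' => (if Y ω' < θ0 then (1 : ℝ) else 0) - τ | 𝒢]) ω
                - ((if Y ω < θ0 then (1 : ℝ) else 0) - τ))
          - (μ[fun ω' => (if Y ω' < θ0 then (1 : ℝ) else 0) - τ | 𝒢]) ω) μ
        - variance (fun ω =>
            ((μ[T | MeasurableSpace.comap X inferInstance]) ω)⁻¹ * T ω
              * (((if Y ω < θ0 then (1 : ℝ) else 0) - τ)
                  - (μ[fun ω' => (if Y ω' < θ0 then (1 : ℝ) else 0) - τ | 𝒢]) ω)) μ := by
  set ψ : Ω → ℝ := fun ω => (if Y ω < θ0 then (1 : ℝ) else 0) - τ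
  set m := MeasurableSpace.comap X inferInstance
  have hm : m ≤ _ := hX.comap_le
  have hψ_ind : ψ = (Y ⁻¹' Set.Iio θ0).indicator 1 - fun _ => τ := by
    ext ω; by_cases h : Y ω < θ0 <;> simp [ψ, Set.indicator, h]
  have hU : MemLp ((Y ⁻¹' Set.Iio θ0).indicator (1 : Ω → ℝ)) ⊤ μ :=
    (memLp_top_const (1 : ℝ)).indicator (hY measurableSet_Iio)
  have hψ : MemLp ψ ⊤ μ := by
    rw [hψ_ind]
    exact hU.sub (memLp_top_const τ)
  have hTb : MemLp T ⊤ μ := memLp_top_of_bound hT.aestronglyMeasurable 1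
    (.of_forall fun ω => by rcases hT01 ω with h | h <;> simp [h])
  have hfact : μ[T * ψ|m] =ᵐ[μ] μ[T|m] * μ[ψ|m] := by
    rw [hψ_ind]
    exact condExp_mul_sub_const hm (hTb.integrable le_top)
      (hU.integrable le_top) ((hU.mul hTb : MemLp (T * _) ⊤ μ).integrable le_top)
      (condExp_mul_indicator_of_condIndepFun hm hT hY hT01 hunconf measurableSet_Iio) τ
  have hgain := variance_ipw_sub_variance_ipw_eq_integral_sq hm h𝒢 hTb hψ hθ0 hc.1
    (hpos.mono fun _ h => h.1) hfact
  have hφ0 : ∫ ω, (μ[ψ|𝒢]) ω ∂μ = 0 := (integral_condExp (h𝒢.trans hm)).trans hθ0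
  have hvar : Var[μ[ψ|𝒢]; μ] = ∫ ω, (μ[ψ|𝒢]) ω ^ 2 ∂μ :=
    variance_of_integral_eq_zero integrable_condExp.aestronglyMeasurable.aemeasurable hφ0
  refine ⟨?_, hgain, hgain ▸ integral_nonneg fun _ => sq_nonneg _⟩
  rw [hgain, hvar, integral_condExp_mul_eq_integral_condExp_sq (h𝒢.trans hm)
    (hψ.mono_exponent le_top)]
  ring
end

section
/- (Semiparametric optimality inequality for the quantile, equation (21)) One has Var(π(X)^{−1}T(ψ(Y,θ0) − φ(X,θ0))) = E[π(X)^{−2}T(ψ(Y,θ0) − φ(X,θ0))²], and for every measurable g: 𝒳 → ℝ with E[π(X)^{−2}T(ψ(Y,θ0) − g(X))²] < ∞, E[π(X)^{−2}T(ψ(Y,θ0) − φ(X,θ0))²] ≤ E[π(X)^{−2}T(ψ(Y,θ0) − g(X))²], with equality if and only if g(X) = φ(X,θ0) almost surely. -/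
/-!
The residual `W = T (ψ - φ)` has zero conditional mean given `X`: by unconfoundedness
`E[T ψ | X] = π φ`, and pulling out `φ` gives `E[T φ | X] = π φ`. So `W` is orthogonal to every
`X`-measurable multiplier. For the multiplier `π⁻¹` this says `π⁻¹ W` is centred, so its variance
is its second moment, which is `E[π⁻² T (ψ - φ)²]` because `T² = T`. For the multiplier
`π⁻² (φ - g(X))` it kills the cross term of the Pythagorean split
`E[π⁻² T (ψ - g)²] = E[π⁻² T (ψ - φ)²] + E[π⁻² T (φ - g)²]`; by the tower property the last
term is `E[π⁻¹ (φ - g)²]`, which vanishes iff `g(X) = φ` a.s. because `π > 0`.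
-/

open MeasureTheory ProbabilityTheory

section WeightedSquares

variable {Ω : Type*} [MeasurableSpace Ω] {μ : Measure Ω} {w a b c : Ω → ℝ}

lemma MeasureTheory.Integrable.mul_mul_of_mul_sq (hw : 0 ≤ᵐ[μ] w)
    (ha : Integrable (fun ω => w ω * a ω ^ 2) μ) (hb : Integrable (fun ω => w ω * b ω ^ 2) μ)
    (hab : AEStronglyMeasurable (fun ω => w ω * a ω * b ω) μ) :
    Integrable (fun ω => w ω * a ω * b ω) μ := by
  refine (ha.add hb).mono' hab ?_
  filter_upwards [hw] with ω hwω
  rw [Pi.add_apply, Real.norm_eq_abs, abs_le]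
  constructor <;>
    nlinarith [mul_nonneg hwω (sq_nonneg (a ω + b ω)), mul_nonneg hwω (sq_nonneg (a ω - b ω))]

lemma MeasureTheory.Integrable.mul_sub_sq_of_mul_sub_sq (hw : 0 ≤ᵐ[μ] w)
    (hab : Integrable (fun ω => w ω * (a ω - b ω) ^ 2) μ)
    (hac : Integrable (fun ω => w ω * (a ω - c ω) ^ 2) μ)
    (hcb : AEStronglyMeasurable (fun ω => w ω * (c ω - b ω) ^ 2) μ) :
    Integrable (fun ω => w ω * (c ω - b ω) ^ 2) μ := by
  refine ((hab.const_mul 2).add (hac.const_mul 2)).mono' hcb ?_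
  filter_upwards [hw] with ω hwω
  rw [Pi.add_apply, Real.norm_eq_abs, abs_of_nonneg (mul_nonneg hwω (sq_nonneg _))]
  nlinarith [mul_nonneg hwω (sq_nonneg (a ω - b ω + (a ω - c ω)))]

lemma integral_mul_sub_sq_eq_add (hw : 0 ≤ᵐ[μ] w) (hwm : AEStronglyMeasurable w μ)
    (ham : AEStronglyMeasurable a μ) (hbm : AEStronglyMeasurable b μ)
    (hcm : AEStronglyMeasurable c μ)
    (hab : Integrable (fun ω => w ω * (a ω - b ω) ^ 2) μ)
    (hac : Integrable (fun ω => w ω * (a ω - c ω) ^ 2) μ)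
    (horth : ∫ ω, w ω * (a ω - c ω) * (c ω - b ω) ∂μ = 0) :
    ∫ ω, w ω * (a ω - b ω) ^ 2 ∂μ
      = ∫ ω, w ω * (a ω - c ω) ^ 2 ∂μ + ∫ ω, w ω * (c ω - b ω) ^ 2 ∂μ := by
  have hcb : Integrable (fun ω => w ω * (c ω - b ω) ^ 2) μ :=
    hab.mul_sub_sq_of_mul_sub_sq hw hac (by fun_prop)
  have hsum : Integrable (fun ω => w ω * (a ω - c ω) ^ 2 + w ω * (c ω - b ω) ^ 2) μ :=
    hac.add hcb
  have hcross : Integrable (fun ω => w ω * (a ω - c ω) * (c ω - b ω)) μ :=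
    hac.mul_mul_of_mul_sq hw hcb (by fun_prop)
  calc ∫ ω, w ω * (a ω - b ω) ^ 2 ∂μ
      = ∫ ω, (w ω * (a ω - c ω) ^ 2 + w ω * (c ω - b ω) ^ 2)
          + 2 * (w ω * (a ω - c ω) * (c ω - b ω)) ∂μ := by
        congr 1 with ω; ring
    _ = ∫ ω, w ω * (a ω - c ω) ^ 2 ∂μ + ∫ ω, w ω * (c ω - b ω) ^ 2 ∂μ := by
        rw [integral_add hsum (hcross.const_mul 2), integral_add hac hcb,
          integral_const_mul, horth, mul_zero, add_zero]

end WeightedSquares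

section CondExp

variable {Ω : Type*} {m mΩ : MeasurableSpace Ω} {μ : Measure Ω} {f h : Ω → ℝ}

lemma integral_mul_eq_integral_mul_condExp (hm : m ≤ mΩ) [SigmaFinite (μ.trim hm)]
    (hh : StronglyMeasurable[m] h) (hhf : Integrable (fun ω => h ω * f ω) μ)
    (hf : Integrable f μ) :
    ∫ ω, h ω * f ω ∂μ = ∫ ω, h ω * μ[f | m] ω ∂μ := by
  rw [← integral_condExp hm]
  exact integral_congr_ae (condExp_mul_of_stronglyMeasurable_left hh hhf hf)

lemma integral_mul_eq_zero_of_condExp_ae_eq_zero (hm : m ≤ mΩ) [SigmaFinite (μ.trim hm)]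
    (hh : StronglyMeasurable[m] h) (hhf : Integrable (fun ω => h ω * f ω) μ)
    (hf : Integrable f μ) (hf0 : μ[f | m] =ᵐ[μ] 0) :
    ∫ ω, h ω * f ω ∂μ = 0 := by
  rw [integral_mul_eq_integral_mul_condExp hm hh hhf hf]
  refine (integral_congr_ae ?_).trans (integral_zero Ω ℝ)
  filter_upwards [hf0] with ω hω
  simp [hω]

lemma integral_mul_eq_zero_iff_of_condExp_pos (hm : m ≤ mΩ) [SigmaFinite (μ.trim hm)]
    (hh : StronglyMeasurable[m] h) (hh0 : 0 ≤ h) (hhf : Integrable (fun ω => h ω * f ω) μ)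
    (hf : Integrable f μ) (hpos : ∀ᵐ ω ∂μ, 0 < μ[f | m] ω) :
    ∫ ω, h ω * f ω ∂μ = 0 ↔ h =ᵐ[μ] 0 := by
  have hpull := condExp_mul_of_stronglyMeasurable_left hh hhf hf
  have hint : Integrable (fun ω => h ω * μ[f | m] ω) μ := integrable_condExp.congr hpull
  have hnonneg : 0 ≤ᵐ[μ] fun ω => h ω * μ[f | m] ω := by
    filter_upwards [hpos] with ω hω using mul_nonneg (hh0 ω) hω.le
  rw [integral_mul_eq_integral_mul_condExp hm hh hhf hf,
    integral_eq_zero_iff_of_nonneg_ae hnonneg hint]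
  refine ⟨fun h0 => ?_, fun h0 => ?_⟩
  · filter_upwards [h0, hpos] with ω h0ω hω
    exact (mul_eq_zero.mp h0ω).resolve_right hω.ne'
  · filter_upwards [h0] with ω h0ω
    simp [h0ω]

lemma condExp_mul_sub_condExp_ae_eq {T ψ : Ω → ℝ} (hT : Integrable T μ)
    (hTψ : Integrable (fun ω => T ω * ψ ω) μ)
    (hTφ : Integrable (fun ω => μ[ψ | m] ω * T ω) μ) :
    μ[fun ω => T ω * (ψ ω - μ[ψ | m] ω) | m]
      =ᵐ[μ] μ[fun ω => T ω * ψ ω | m] - μ[T | m] * μ[ψ | m] := by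
  have hsplit : (fun ω => T ω * (ψ ω - μ[ψ | m] ω))
      = (fun ω => T ω * ψ ω) - μ[ψ | m] * T := by
    ext ω; simp only [Pi.sub_apply, Pi.mul_apply]; ring
  rw [hsplit]
  refine (condExp_sub hTψ hTφ m).trans ?_
  filter_upwards [condExp_mul_of_stronglyMeasurable_left stronglyMeasurable_condExp hTφ hT]
    with ω hω
  change _ - μ[μ[ψ | m] * T | m] ω = _
  rw [hω, mul_comm]
  rfl

end CondExp

section InversePropensityWeighting

variable {Ω : Type*} {m mΩ : MeasurableSpace Ω} {μ : Measure Ω} {T ψ : Ω → ℝ} {C c : ℝ}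

lemma ae_abs_mul_sub_condExp_le (hT01 : ∀ ω, T ω = 0 ∨ T ω = 1) (hψC : ∀ ω, |ψ ω| ≤ C) :
    ∀ᵐ ω ∂μ, |T ω * (ψ ω - μ[ψ | m] ω)| ≤ 2 * C := by
  filter_upwards [ae_bdd_abs_condExp_of_ae_bdd_abs (m := m) (μ := μ) (.of_forall hψC)]
    with ω hφ
  have hψφ : |ψ ω - μ[ψ | m] ω| ≤ 2 * C := by
    linarith [abs_sub (ψ ω) (μ[ψ | m] ω), hψC ω]
  rcases hT01 ω with hT | hT <;> simp [hT, hψφ, (abs_nonneg _).trans (hψC ω)]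

lemma condExp_mul_sub_condExp_ae_eq_zero [IsFiniteMeasure μ] (hT : Measurable T)
    (hT01 : ∀ ω, T ω = 0 ∨ T ω = 1) (hψ : Integrable ψ μ)
    (huncorr : μ[fun ω => T ω * ψ ω | m] =ᵐ[μ] μ[T | m] * μ[ψ | m]) :
    μ[fun ω => T ω * (ψ ω - μ[ψ | m] ω) | m] =ᵐ[μ] 0 := by
  have hT1 : ∀ᵐ ω ∂μ, ‖T ω‖ ≤ 1 :=
    .of_forall fun ω => by rcases hT01 ω with h | h <;> simp [h]
  have hTint : Integrable T μ := .of_bound hT.aestronglyMeasurable 1 hT1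
  filter_upwards [condExp_mul_sub_condExp_ae_eq hTint (hψ.bdd_mul hT.aestronglyMeasurable hT1)
    (integrable_condExp.mul_bdd hT.aestronglyMeasurable hT1), huncorr] with ω hω hωψ
  rw [hω, Pi.sub_apply, hωψ, sub_self, Pi.zero_apply]

lemma integrable_mul_sub_condExp [IsFiniteMeasure μ] (hm : m ≤ mΩ) (hT : Measurable T)
    (hT01 : ∀ ω, T ω = 0 ∨ T ω = 1) (hψ : Measurable ψ) (hψC : ∀ ω, |ψ ω| ≤ C) :
    Integrable (fun ω => T ω * (ψ ω - μ[ψ | m] ω)) μ := by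
  have hφm : Measurable (μ[ψ | m]) := (stronglyMeasurable_condExp.mono hm).measurable
  exact .of_bound (by fun_prop) (2 * C) (by simpa using ae_abs_mul_sub_condExp_le hT01 hψC)

lemma integral_inv_sq_condExp_mul_sq_eq_zero_iff [IsFiniteMeasure μ] (hm : m ≤ mΩ)
    (hT : Measurable T) (hT01 : ∀ ω, T ω = 0 ∨ T ω = 1) (hπ : ∀ᵐ ω ∂μ, 0 < μ[T | m] ω)
    {D : Ω → ℝ} (hD : StronglyMeasurable[m] D)
    (hDint : Integrable (fun ω => (μ[T | m] ω ^ 2)⁻¹ * T ω * D ω ^ 2) μ) :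
    ∫ ω, (μ[T | m] ω ^ 2)⁻¹ * T ω * D ω ^ 2 ∂μ = 0 ↔ D =ᵐ[μ] 0 := by
  have hT1 : ∀ᵐ ω ∂μ, ‖T ω‖ ≤ 1 :=
    .of_forall fun ω => by rcases hT01 ω with h | h <;> simp [h]
  have hh : StronglyMeasurable[m] fun ω => (μ[T | m] ω ^ 2)⁻¹ * D ω ^ 2 :=
    ((stronglyMeasurable_condExp.measurable.pow_const 2).inv.mul
      (hD.measurable.pow_const 2)).stronglyMeasurable
  calc ∫ ω, (μ[T | m] ω ^ 2)⁻¹ * T ω * D ω ^ 2 ∂μ = 0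
      ↔ ∫ ω, (μ[T | m] ω ^ 2)⁻¹ * D ω ^ 2 * T ω ∂μ = 0 := by
        rw [integral_congr_ae (g := fun ω => (μ[T | m] ω ^ 2)⁻¹ * D ω ^ 2 * T ω)
          (.of_forall fun ω => by ring)]
    _ ↔ (fun ω => (μ[T | m] ω ^ 2)⁻¹ * D ω ^ 2) =ᵐ[μ] 0 :=
        integral_mul_eq_zero_iff_of_condExp_pos hm hh
          (fun ω => by dsimp only [Pi.zero_apply]; positivity)
          (hDint.congr (.of_forall fun ω => by ring)) (.of_bound hT.aestronglyMeasurable 1 hT1) hπ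
    _ ↔ D =ᵐ[μ] 0 := by
        refine ⟨fun h0 => ?_, fun h0 => ?_⟩
        · filter_upwards [h0, hπ] with ω h0ω hπω
          simpa [hπω.ne'] using h0ω
        · filter_upwards [h0] with ω h0ω
          simp [h0ω]

variable [IsProbabilityMeasure μ]

lemma integrable_inv_sq_condExp_mul_sub_condExp_sq (hm : m ≤ mΩ) (hT : Measurable T)
    (hT01 : ∀ ω, T ω = 0 ∨ T ω = 1) (hψ : Measurable ψ) (hψC : ∀ ω, |ψ ω| ≤ C) (hc : 0 < c)
    (hπ : ∀ᵐ ω ∂μ, c < μ[T | m] ω) :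
    Integrable (fun ω => (μ[T | m] ω ^ 2)⁻¹ * T ω * (ψ ω - μ[ψ | m] ω) ^ 2) μ := by
  have hπm : Measurable (μ[T | m]) := (stronglyMeasurable_condExp.mono hm).measurable
  have hφm : Measurable (μ[ψ | m]) := (stronglyMeasurable_condExp.mono hm).measurable
  refine .of_bound (by fun_prop) ((c ^ 2)⁻¹ * (2 * C) ^ 2) ?_
  filter_upwards [hπ, ae_abs_mul_sub_condExp_le (μ := μ) (m := m) hT01 hψC] with ω hπω hW
  have hT2 : T ω ^ 2 = T ω := by rcases hT01 ω with h | h <;> simp [h]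
  have hinv : (μ[T | m] ω ^ 2)⁻¹ ≤ (c ^ 2)⁻¹ :=
    inv_anti₀ (by positivity) (pow_le_pow_left₀ hc.le hπω.le 2)
  calc ‖(μ[T | m] ω ^ 2)⁻¹ * T ω * (ψ ω - μ[ψ | m] ω) ^ 2‖
      = (μ[T | m] ω ^ 2)⁻¹ * |T ω * (ψ ω - μ[ψ | m] ω)| ^ 2 := by
        rw [sq_abs, mul_pow, hT2, Real.norm_eq_abs, abs_of_nonneg (by
          rw [mul_assoc, ← hT2, ← mul_pow]; positivity), mul_assoc]
    _ ≤ (c ^ 2)⁻¹ * (2 * C) ^ 2 := by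
        gcongr

theorem variance_inv_condExp_mul_sub_condExp (hm : m ≤ mΩ) (hT : Measurable T)
    (hT01 : ∀ ω, T ω = 0 ∨ T ω = 1) (hψ : Measurable ψ) (hψC : ∀ ω, |ψ ω| ≤ C) (hc : 0 < c)
    (hπ : ∀ᵐ ω ∂μ, c < μ[T | m] ω)
    (hres : μ[fun ω => T ω * (ψ ω - μ[ψ | m] ω) | m] =ᵐ[μ] 0) :
    variance (fun ω => (μ[T | m] ω)⁻¹ * T ω * (ψ ω - μ[ψ | m] ω)) μ
      = ∫ ω, (μ[T | m] ω ^ 2)⁻¹ * T ω * (ψ ω - μ[ψ | m] ω) ^ 2 ∂μ := by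
  have hπm : StronglyMeasurable[m] (μ[T | m]) := stronglyMeasurable_condExp
  have hφm : Measurable (μ[ψ | m]) := (stronglyMeasurable_condExp.mono hm).measurable
  have hπinv : StronglyMeasurable[m] fun ω => (μ[T | m] ω)⁻¹ :=
    hπm.measurable.inv.stronglyMeasurable
  have hW := ae_abs_mul_sub_condExp_le (μ := μ) (m := m) hT01 hψC
  have hVbd : ∀ᵐ ω ∂μ, ‖(μ[T | m] ω)⁻¹ * (T ω * (ψ ω - μ[ψ | m] ω))‖ ≤ c⁻¹ * (2 * C) := by
    filter_upwards [hπ, hW] with ω hπω hWω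
    rw [Real.norm_eq_abs, abs_mul, abs_inv, abs_of_pos (hc.trans hπω)]
    gcongr
  have hVm : AEStronglyMeasurable
      (fun ω => (μ[T | m] ω)⁻¹ * (T ω * (ψ ω - μ[ψ | m] ω))) μ := by
    have := hπinv.mono hm; fun_prop
  have hmean : ∫ ω, (μ[T | m] ω)⁻¹ * (T ω * (ψ ω - μ[ψ | m] ω)) ∂μ = 0 :=
    integral_mul_eq_zero_of_condExp_ae_eq_zero hm hπinv (.of_bound hVm _ hVbd)
      (integrable_mul_sub_condExp hm hT hT01 hψ hψC) hres
  simp_rw [mul_assoc _ (T _)]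
  rw [variance_eq_sub (.of_bound hVm _ hVbd), hmean, zero_pow two_ne_zero, sub_zero]
  congr 1 with ω
  have hT2 : T ω ^ 2 = T ω := by rcases hT01 ω with h | h <;> simp [h]
  rw [Pi.pow_apply, mul_pow, mul_pow, hT2, inv_pow]

theorem integral_inv_sq_condExp_mul_sub_sq_eq_add (hm : m ≤ mΩ) (hT : Measurable T)
    (hT01 : ∀ ω, T ω = 0 ∨ T ω = 1) (hψ : Measurable ψ) (hψC : ∀ ω, |ψ ω| ≤ C) (hc : 0 < c)
    (hπ : ∀ᵐ ω ∂μ, c < μ[T | m] ω)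
    (hres : μ[fun ω => T ω * (ψ ω - μ[ψ | m] ω) | m] =ᵐ[μ] 0)
    {G : Ω → ℝ} (hG : StronglyMeasurable[m] G)
    (hGint : Integrable (fun ω => (μ[T | m] ω ^ 2)⁻¹ * T ω * (ψ ω - G ω) ^ 2) μ) :
    ∫ ω, (μ[T | m] ω ^ 2)⁻¹ * T ω * (ψ ω - G ω) ^ 2 ∂μ
      = ∫ ω, (μ[T | m] ω ^ 2)⁻¹ * T ω * (ψ ω - μ[ψ | m] ω) ^ 2 ∂μ
        + ∫ ω, (μ[T | m] ω ^ 2)⁻¹ * T ω * (μ[ψ | m] ω - G ω) ^ 2 ∂μ := by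
  have hπm : StronglyMeasurable[m] (μ[T | m]) := stronglyMeasurable_condExp
  have hφm : StronglyMeasurable[m] (μ[ψ | m]) := stronglyMeasurable_condExp
  have hπm' : Measurable (μ[T | m]) := (hπm.mono hm).measurable
  have hφm' : Measurable (μ[ψ | m]) := (hφm.mono hm).measurable
  have hGm : Measurable G := (hG.mono hm).measurable
  have hw : 0 ≤ᵐ[μ] fun ω => (μ[T | m] ω ^ 2)⁻¹ * T ω := .of_forall fun ω => by
    rcases hT01 ω with h | h <;> simp [h, sq_nonneg]
  have hψφ := integrable_inv_sq_condExp_mul_sub_condExp_sq hm hT hT01 hψ hψC hc hπ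
  have hφG : Integrable (fun ω => (μ[T | m] ω ^ 2)⁻¹ * T ω * (μ[ψ | m] ω - G ω) ^ 2) μ :=
    hGint.mul_sub_sq_of_mul_sub_sq hw hψφ (by fun_prop)
  have hcross : Integrable
      (fun ω => (μ[T | m] ω ^ 2)⁻¹ * T ω * (ψ ω - μ[ψ | m] ω) * (μ[ψ | m] ω - G ω)) μ :=
    hψφ.mul_mul_of_mul_sq hw hφG (by fun_prop)
  refine integral_mul_sub_sq_eq_add hw (by fun_prop) hψ.aestronglyMeasurable
    hGm.aestronglyMeasurable hφm'.aestronglyMeasurable hGint hψφ ?_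
  have hh : StronglyMeasurable[m] fun ω => (μ[T | m] ω ^ 2)⁻¹ * (μ[ψ | m] ω - G ω) :=
    ((hπm.measurable.pow_const 2).inv.mul (hφm.measurable.sub hG.measurable)).stronglyMeasurable
  calc ∫ ω, (μ[T | m] ω ^ 2)⁻¹ * T ω * (ψ ω - μ[ψ | m] ω) * (μ[ψ | m] ω - G ω) ∂μ
      = ∫ ω, (μ[T | m] ω ^ 2)⁻¹ * (μ[ψ | m] ω - G ω) * (T ω * (ψ ω - μ[ψ | m] ω)) ∂μ := by
        congr 1 with ω; ring
    _ = 0 := integral_mul_eq_zero_of_condExp_ae_eq_zero hm hh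
        (hcross.congr (.of_forall fun ω => by ring))
        (integrable_mul_sub_condExp hm hT hT01 hψ hψC) hres

theorem integral_inv_sq_condExp_mul_sub_condExp_sq_le_and_eq_iff (hm : m ≤ mΩ)
    (hT : Measurable T) (hT01 : ∀ ω, T ω = 0 ∨ T ω = 1) (hψ : Measurable ψ)
    (hψC : ∀ ω, |ψ ω| ≤ C) (hc : 0 < c) (hπ : ∀ᵐ ω ∂μ, c < μ[T | m] ω)
    (hres : μ[fun ω => T ω * (ψ ω - μ[ψ | m] ω) | m] =ᵐ[μ] 0)
    {G : Ω → ℝ} (hG : StronglyMeasurable[m] G)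
    (hGint : Integrable (fun ω => (μ[T | m] ω ^ 2)⁻¹ * T ω * (ψ ω - G ω) ^ 2) μ) :
    (∫ ω, (μ[T | m] ω ^ 2)⁻¹ * T ω * (ψ ω - μ[ψ | m] ω) ^ 2 ∂μ
        ≤ ∫ ω, (μ[T | m] ω ^ 2)⁻¹ * T ω * (ψ ω - G ω) ^ 2 ∂μ)
      ∧ (∫ ω, (μ[T | m] ω ^ 2)⁻¹ * T ω * (ψ ω - μ[ψ | m] ω) ^ 2 ∂μ
          = ∫ ω, (μ[T | m] ω ^ 2)⁻¹ * T ω * (ψ ω - G ω) ^ 2 ∂μ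
        ↔ G =ᵐ[μ] μ[ψ | m]) := by
  have hπm : Measurable (μ[T | m]) := (stronglyMeasurable_condExp.mono hm).measurable
  have hφm : StronglyMeasurable[m] (μ[ψ | m]) := stronglyMeasurable_condExp
  have hφm' : Measurable (μ[ψ | m]) := (hφm.mono hm).measurable
  have hGm : Measurable G := (hG.mono hm).measurable
  have hw : 0 ≤ᵐ[μ] fun ω => (μ[T | m] ω ^ 2)⁻¹ * T ω := .of_forall fun ω => by
    rcases hT01 ω with h | h <;> simp [h, sq_nonneg]
  have hφG : Integrable (fun ω => (μ[T | m] ω ^ 2)⁻¹ * T ω * (μ[ψ | m] ω - G ω) ^ 2) μ :=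
    hGint.mul_sub_sq_of_mul_sub_sq hw
      (integrable_inv_sq_condExp_mul_sub_condExp_sq hm hT hT01 hψ hψC hc hπ) (by fun_prop)
  rw [integral_inv_sq_condExp_mul_sub_sq_eq_add hm hT hT01 hψ hψC hc hπ hres hG hGint]
  refine ⟨le_add_of_nonneg_right (integral_nonneg_of_ae ?_), ?_⟩
  · filter_upwards [hw] with ω hωw using mul_nonneg hωw (sq_nonneg _)
  rw [left_eq_add]
  exact (integral_inv_sq_condExp_mul_sq_eq_zero_iff hm hT hT01 (hπ.mono fun ω hω => hc.trans hω)
    (D := fun ω => μ[ψ | m] ω - G ω) (hφm.sub hG) hφG).trans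
    (Filter.eventuallyEq_comm.trans Filter.eventuallyEq_iff_sub).symm

end InversePropensityWeighting

section Quantile

noncomputable def quantileScore (τ θ y : ℝ) : ℝ := (if y < θ then 1 else 0) - τ

lemma measurable_quantileScore (τ θ : ℝ) : Measurable (quantileScore τ θ) :=
  (Measurable.ite measurableSet_Iio measurable_const measurable_const).sub_const τ

lemma abs_quantileScore_le (τ θ y : ℝ) : |quantileScore τ θ y| ≤ 1 + |τ| :=
  (abs_sub _ _).trans (by split_ifs <;> simp)

variable {Ω : Type*} {m mΩ : MeasurableSpace Ω} [StandardBorelSpace Ω] {μ : Measure Ω}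
  [IsFiniteMeasure μ] {T Y : Ω → ℝ}

/-- Both `T` and `ψ(Y, θ)` are affine in indicators of events, so conditional independence in
its product form for events already makes them conditionally uncorrelated. -/
lemma condExp_mul_quantileScore_ae_eq (hm : m ≤ mΩ) (hT : Measurable T) (hY : Measurable Y)
    (hT01 : ∀ ω, T ω = 0 ∨ T ω = 1) (hTY : CondIndepFun m hm T Y μ) (τ θ : ℝ) :
    μ[fun ω => T ω * quantileScore τ θ (Y ω) | m]
      =ᵐ[μ] μ[T | m] * μ[fun ω => quantileScore τ θ (Y ω) | m] := by
  set A := T ⁻¹' {1}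
  set B := Y ⁻¹' Set.Iio θ
  have hA : Integrable (A.indicator fun _ => (1 : ℝ)) μ :=
    (integrable_const 1).indicator (hT (measurableSet_singleton 1))
  have hB : Integrable (B.indicator fun _ => (1 : ℝ)) μ :=
    (integrable_const 1).indicator (hY measurableSet_Iio)
  have hAB : Integrable ((A ∩ B).indicator fun _ => (1 : ℝ)) μ :=
    (integrable_const 1).indicator ((hT (measurableSet_singleton 1)).inter (hY measurableSet_Iio))
  have hTA : T = A.indicator fun _ => 1 := by
    ext ω; rcases hT01 ω with h | h <;> simp [A, h]
  have hψB : (fun ω => quantileScore τ θ (Y ω)) = B.indicator (fun _ => 1) - fun _ => τ := by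
    ext ω; by_cases h : Y ω < θ <;> simp [quantileScore, B, h]
  have hprod : (fun ω => T ω * quantileScore τ θ (Y ω))
      = (A ∩ B).indicator (fun _ => 1) - τ • A.indicator (fun _ => 1) := by
    ext ω
    rw [congrFun hψB ω, hTA]
    by_cases hωA : ω ∈ A <;> by_cases hωB : ω ∈ B <;> simp [hωA, hωB]
  rw [hprod, hψB, hTA]
  filter_upwards [condExp_sub hAB (hA.smul τ) m, condExp_smul τ (A.indicator fun _ => (1 : ℝ)) m,
    condExp_sub hB (integrable_const τ) m,
    (condIndepFun_iff_condExp_inter_preimage_eq_mul hT hY).mp hTY {1} (Set.Iio θ)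
      (measurableSet_singleton 1) measurableSet_Iio] with ω h1 h2 h3 h4
  rw [h1, Pi.mul_apply, h3, Pi.sub_apply, Pi.sub_apply, h2, h4, condExp_const hm]
  simp only [Pi.smul_apply, smul_eq_mul]
  ring

end Quantile

theorem quantile_semiparametric_optimality_general
    {Ω : Type*} [MeasurableSpace Ω] [StandardBorelSpace Ω]
    (μ : Measure Ω) [IsProbabilityMeasure μ]
    {𝒳 : Type*} [MeasurableSpace 𝒳]
    (Y T : Ω → ℝ) (X : Ω → 𝒳)
    (hY : Measurable Y) (hT : Measurable T) (hX : Measurable X)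
    -- T is a binary treatment indicator
    (hT01 : ∀ ω, T ω = 0 ∨ T ω = 1)
    -- unconfoundedness: T ⫫ Y | X
    (hunconf : CondIndepFun (MeasurableSpace.comap X inferInstance) hX.comap_le T Y μ)
    -- positivity of the propensity score π(X) := E[T | X]
    (c : ℝ) (hc : c ∈ Set.Ioo (0 : ℝ) 1)
    (hpos : ∀ᵐ ω ∂μ,
      (μ[T | MeasurableSpace.comap X inferInstance]) ω ∈ Set.Ioo c (1 - c))
    -- quantile level and target quantile θ0 : E[ψ(Y,θ0)] = 0
    (τ : ℝ) (θ0 : ℝ) :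
    -- (a) the variance identity
    (variance (fun ω =>
        ((μ[T | MeasurableSpace.comap X inferInstance]) ω)⁻¹ * T ω
          * (((if Y ω < θ0 then (1 : ℝ) else 0) - τ)
              - (μ[fun ω' => (if Y ω' < θ0 then (1 : ℝ) else 0) - τ |
                    MeasurableSpace.comap X inferInstance]) ω)) μ
      = ∫ ω, (((μ[T | MeasurableSpace.comap X inferInstance]) ω) ^ 2)⁻¹ * T ω
          * (((if Y ω < θ0 then (1 : ℝ) else 0) - τ)
              - (μ[fun ω' => (if Y ω' < θ0 then (1 : ℝ) else 0) - τ |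
                    MeasurableSpace.comap X inferInstance]) ω) ^ 2 ∂μ)
    -- (b) optimality of φ(X,θ0) = E[ψ(Y,θ0) | X], with equality characterization
    ∧ ∀ g : 𝒳 → ℝ, Measurable g →
        Integrable (fun ω =>
          (((μ[T | MeasurableSpace.comap X inferInstance]) ω) ^ 2)⁻¹ * T ω
            * (((if Y ω < θ0 then (1 : ℝ) else 0) - τ) - g (X ω)) ^ 2) μ →
        ((∫ ω, (((μ[T | MeasurableSpace.comap X inferInstance]) ω) ^ 2)⁻¹ * T ω
            * (((if Y ω < θ0 then (1 : ℝ) else 0) - τ)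
                - (μ[fun ω' => (if Y ω' < θ0 then (1 : ℝ) else 0) - τ |
                      MeasurableSpace.comap X inferInstance]) ω) ^ 2 ∂μ
          ≤ ∫ ω, (((μ[T | MeasurableSpace.comap X inferInstance]) ω) ^ 2)⁻¹ * T ω
            * (((if Y ω < θ0 then (1 : ℝ) else 0) - τ) - g (X ω)) ^ 2 ∂μ)
        ∧ ((∫ ω, (((μ[T | MeasurableSpace.comap X inferInstance]) ω) ^ 2)⁻¹ * T ω
              * (((if Y ω < θ0 then (1 : ℝ) else 0) - τ)
                  - (μ[fun ω' => (if Y ω' < θ0 then (1 : ℝ) else 0) - τ |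
                        MeasurableSpace.comap X inferInstance]) ω) ^ 2 ∂μ
            = ∫ ω, (((μ[T | MeasurableSpace.comap X inferInstance]) ω) ^ 2)⁻¹ * T ω
              * (((if Y ω < θ0 then (1 : ℝ) else 0) - τ) - g (X ω)) ^ 2 ∂μ)
          ↔ (fun ω => g (X ω))
              =ᵐ[μ] μ[fun ω' => (if Y ω' < θ0 then (1 : ℝ) else 0) - τ |
                      MeasurableSpace.comap X inferInstance])) := by
  have hm := hX.comap_le
  have hψ : Measurable fun ω => quantileScore τ θ0 (Y ω) := (measurable_quantileScore τ θ0).comp hY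
  have hψC (ω : Ω) : |quantileScore τ θ0 (Y ω)| ≤ 1 + |τ| := abs_quantileScore_le τ θ0 (Y ω)
  have hπ : ∀ᵐ ω ∂μ, c < μ[T | MeasurableSpace.comap X inferInstance] ω :=
    hpos.mono fun ω hω => hω.1
  have hres := condExp_mul_sub_condExp_ae_eq_zero hT hT01
    (.of_bound hψ.aestronglyMeasurable _ (.of_forall hψC))
    (condExp_mul_quantileScore_ae_eq hm hT hY hT01 hunconf τ θ0)
  refine ⟨variance_inv_condExp_mul_sub_condExp hm hT hT01 hψ hψC hc.1 hπ hres,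
    fun g hg hgint => ?_⟩
  exact integral_inv_sq_condExp_mul_sub_condExp_sq_le_and_eq_iff hm hT hT01 hψ hψC hc.1 hπ hres
    (hg.comp (comap_measurable X)).stronglyMeasurable hgint

theorem quantile_semiparametric_optimality
    {Ω : Type*} [MeasurableSpace Ω] [StandardBorelSpace Ω]
    (μ : Measure Ω) [IsProbabilityMeasure μ]
    {𝒳 : Type*} [MeasurableSpace 𝒳]
    (Y T : Ω → ℝ) (X : Ω → 𝒳)
    (hY : Measurable Y) (hT : Measurable T) (hX : Measurable X)
    -- Y is square integrable
    (hYsq : MemLp Y 2 μ)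
    -- T is a binary treatment indicator
    (hT01 : ∀ ω, T ω = 0 ∨ T ω = 1)
    -- unconfoundedness: T ⫫ Y | X
    (hunconf : CondIndepFun (MeasurableSpace.comap X inferInstance) hX.comap_le T Y μ)
    -- positivity of the propensity score π(X) := E[T | X]
    (c : ℝ) (hc : c ∈ Set.Ioo (0 : ℝ) 1)
    (hpos : ∀ᵐ ω ∂μ,
      (μ[T | MeasurableSpace.comap X inferInstance]) ω ∈ Set.Ioo c (1 - c))
    -- quantile level and target quantile θ0 : E[ψ(Y,θ0)] = 0
    (τ : ℝ) (hτ : τ ∈ Set.Ioo (0 : ℝ) 1) (θ0 : ℝ)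
    (hθ0 : ∫ ω, ((if Y ω < θ0 then (1 : ℝ) else 0) - τ) ∂μ = 0) :
    -- (a) the variance identity
    (variance (fun ω =>
        ((μ[T | MeasurableSpace.comap X inferInstance]) ω)⁻¹ * T ω
          * (((if Y ω < θ0 then (1 : ℝ) else 0) - τ)
              - (μ[fun ω' => (if Y ω' < θ0 then (1 : ℝ) else 0) - τ |
                    MeasurableSpace.comap X inferInstance]) ω)) μ
      = ∫ ω, (((μ[T | MeasurableSpace.comap X inferInstance]) ω) ^ 2)⁻¹ * T ω
          * (((if Y ω < θ0 then (1 : ℝ) else 0) - τ)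
              - (μ[fun ω' => (if Y ω' < θ0 then (1 : ℝ) else 0) - τ |
                    MeasurableSpace.comap X inferInstance]) ω) ^ 2 ∂μ)
    -- (b) optimality of φ(X,θ0) = E[ψ(Y,θ0) | X], with equality characterization
    ∧ ∀ g : 𝒳 → ℝ, Measurable g →
        Integrable (fun ω =>
          (((μ[T | MeasurableSpace.comap X inferInstance]) ω) ^ 2)⁻¹ * T ω
            * (((if Y ω < θ0 then (1 : ℝ) else 0) - τ) - g (X ω)) ^ 2) μ →
        ((∫ ω, (((μ[T | MeasurableSpace.comap X inferInstance]) ω) ^ 2)⁻¹ * T ω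
            * (((if Y ω < θ0 then (1 : ℝ) else 0) - τ)
                - (μ[fun ω' => (if Y ω' < θ0 then (1 : ℝ) else 0) - τ |
                      MeasurableSpace.comap X inferInstance]) ω) ^ 2 ∂μ
          ≤ ∫ ω, (((μ[T | MeasurableSpace.comap X inferInstance]) ω) ^ 2)⁻¹ * T ω
            * (((if Y ω < θ0 then (1 : ℝ) else 0) - τ) - g (X ω)) ^ 2 ∂μ)
        ∧ ((∫ ω, (((μ[T | MeasurableSpace.comap X inferInstance]) ω) ^ 2)⁻¹ * T ω
              * (((if Y ω < θ0 then (1 : ℝ) else 0) - τ)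
                  - (μ[fun ω' => (if Y ω' < θ0 then (1 : ℝ) else 0) - τ |
                        MeasurableSpace.comap X inferInstance]) ω) ^ 2 ∂μ
            = ∫ ω, (((μ[T | MeasurableSpace.comap X inferInstance]) ω) ^ 2)⁻¹ * T ω
              * (((if Y ω < θ0 then (1 : ℝ) else 0) - τ) - g (X ω)) ^ 2 ∂μ)
          ↔ (fun ω => g (X ω))
              =ᵐ[μ] μ[fun ω' => (if Y ω' < θ0 then (1 : ℝ) else 0) - τ |
                      MeasurableSpace.comap X inferInstance])) :=
  quantile_semiparametric_optimality_general μ Y T X hY hT hX hT01 hunconf c hc hpos τ θ0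
end

section
/- (Double robustness of the kernel-smoothing target for the ATE) Let S := g(X) for a measurable transformation g (e.g. S = P0ᵀX), let π*: 𝒳 → (c, 1−c) be measurable, and define κ_t(S) := E[π*(X)^{−1}TY^t | σ(S)] for t = 0,1. If either π*(X) = π(X) almost surely or E[Y | σ(S)] = E[Y | σ(X)] almost surely (but not necessarily both), then κ₀(S) is almost surely bounded away from zero and κ₁(S)/κ₀(S) = E[Y | σ(S)] almost surely. -/
/-!
Write `π = E[T | X]` and `ρ = π / π*(X)`. Under the regular conditional distribution given `X`,
`T` and `Y` are independent, so unconfoundedness gives `E[TY | X] = π · E[Y | X]`; conditioning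
on `X` first and pulling out `π*(X)⁻¹` then yields `κ₀ = E[ρ | S]` and
`κ₁ = E[ρ · E[Y | X] | S]`. If `π* = π` then `ρ = 1`, so `κ₀ = 1` and `κ₁ = E[Y | S]`; if
`E[Y | S] = E[Y | X]` the factor `E[Y | S]` comes out of the outer expectation and
`κ₁ = κ₀ · E[Y | S]`. In either case positivity gives `ρ ≥ c / (1 - c)`, hence `κ₀ ≥ c / (1 - c)`.
-/

open MeasureTheory ProbabilityTheory Filter

theorem ProbabilityTheory.CondIndepFun.condExp_mul_ae_eq_s14 {Ω : Type*} {m mΩ : MeasurableSpace Ω}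
    [StandardBorelSpace Ω] {μ : Measure Ω} [IsFiniteMeasure μ] {hm : m ≤ mΩ} {f g : Ω → ℝ}
    (hfg : CondIndepFun m hm f g μ) (hf : Measurable f) (hg : Measurable g)
    (hfi : Integrable f μ) (hgi : Integrable g μ) (hfgi : Integrable (f * g) μ) :
    μ[f * g | m] =ᵐ[μ] μ[f | m] * μ[g | m] := by
  set κ := condExpKernel μ m
  have hprod := (condIndepFun_iff_map_prod_eq_prod_map_map hf hg).mp hfg
  have hκ : ∀ᵐ ω ∂μ, ∫ y, (f * g) y ∂κ ω = (∫ y, f y ∂κ ω) * ∫ y, g y ∂κ ω := by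
    filter_upwards [ae_of_ae_trim hm hprod] with ω hω
    calc ∫ y, (f * g) y ∂κ ω = ∫ p, p.1 * p.2 ∂(κ.map fun ω ↦ (f ω, g ω)) ω := by
          rw [Kernel.map_apply _ (hf.prodMk hg),
            integral_map (hf.prodMk hg).aemeasurable (by fun_prop)]
          rfl
      _ = ∫ p, p.1 * p.2 ∂((κ.map f) ω).prod ((κ.map g) ω) := by
          rw [hω, Kernel.prod_apply]
      _ = (∫ y, f y ∂κ ω) * ∫ y, g y ∂κ ω := by
          rw [integral_prod_mul (fun x : ℝ ↦ x) (fun y : ℝ ↦ y), Kernel.map_apply _ hf,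
            Kernel.map_apply _ hg, integral_map hf.aemeasurable (by fun_prop),
            integral_map hg.aemeasurable (by fun_prop)]
  filter_upwards [condExp_ae_eq_integral_condExpKernel hm hfgi,
    condExp_ae_eq_integral_condExpKernel hm hfi,
    condExp_ae_eq_integral_condExpKernel hm hgi, hκ] with ω hfgω hfω hgω hω
  rw [Pi.mul_apply, hfgω, hfω, hgω, hω]

section Tower

variable {Ω : Type*} {mS mX mΩ : MeasurableSpace Ω} {μ : Measure Ω} [IsFiniteMeasure μ]

theorem condExp_mul_ae_eq_condExp_mul_condExp (hmS : mS ≤ mX) (hmX : mX ≤ mΩ) {f g : Ω → ℝ}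
    (hf : StronglyMeasurable[mX] f) (hfg : Integrable (f * g) μ) (hg : Integrable g μ) :
    μ[f * g | mS] =ᵐ[μ] μ[f * μ[g | mX] | mS] :=
  (condExp_condExp_of_le hmS hmX).symm.trans
    (condExp_congr_ae (condExp_mul_of_stronglyMeasurable_left hf hfg hg))

theorem condExp_mul_condExp_ae_eq_of_or (hmS : mS ≤ mX) (hmX : mX ≤ mΩ) {ρ Z : Ω → ℝ}
    (hρ : Integrable ρ μ) (hρZ : Integrable (ρ * μ[Z | mX]) μ)
    (h : ρ =ᵐ[μ] 1 ∨ μ[Z | mS] =ᵐ[μ] μ[Z | mX]) :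
    μ[ρ * μ[Z | mX] | mS] =ᵐ[μ] μ[ρ | mS] * μ[Z | mS] := by
  rcases h with hρ1 | hZ
  · have hρS : μ[ρ | mS] =ᵐ[μ] 1 :=
      (condExp_congr_ae hρ1).trans (condExp_const (hmS.trans hmX) (1 : ℝ)).eventuallyEq
    calc μ[ρ * μ[Z | mX] | mS] =ᵐ[μ] μ[μ[Z | mX] | mS] :=
          condExp_congr_ae (by filter_upwards [hρ1] with ω hω; simp [hω])
      _ =ᵐ[μ] μ[Z | mS] := condExp_condExp_of_le hmS hmX
      _ =ᵐ[μ] μ[ρ | mS] * μ[Z | mS] := by filter_upwards [hρS] with ω hω; simp [hω]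
  · have hρZ' : ρ * μ[Z | mX] =ᵐ[μ] ρ * μ[Z | mS] := by
      filter_upwards [hZ] with ω hω; simp [hω]
    exact (condExp_congr_ae hρZ').trans (condExp_mul_of_stronglyMeasurable_right
      stronglyMeasurable_condExp ((integrable_congr hρZ').mp hρZ) hρ)

end Tower

section InverseProbabilityWeighting

variable {Ω : Type*} {mS mX mΩ : MeasurableSpace Ω} {μ : Measure Ω} {T Y W : Ω → ℝ} {c : ℝ}

theorem integrable_inv_mul_of_lt (hmX : mX ≤ mΩ) (hWm : Measurable[mX] W) (hc : 0 < c)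
    (hW : ∀ ω, c < W ω) {f : Ω → ℝ} (hf : Integrable f μ) : Integrable (W⁻¹ * f) μ :=
  hf.bdd_mul (c := c⁻¹) (hWm.inv.mono hmX le_rfl).aestronglyMeasurable <|
    Eventually.of_forall fun ω ↦ by
      simpa [abs_of_pos (hc.trans (hW ω))] using inv_anti₀ hc (hW ω).le

variable [IsFiniteMeasure μ]

theorem le_condExp_inv_mul (hmS : mS ≤ mX) (hmX : mX ≤ mΩ) (hWm : Measurable[mX] W)
    (hc : 0 < c) (hW : ∀ ω, W ω ∈ Set.Ioo c (1 - c)) (hT : Integrable T μ)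
    (hπ : ∀ᵐ ω ∂μ, c < μ[T | mX] ω) :
    ∀ᵐ ω ∂μ, c / (1 - c) ≤ μ[W⁻¹ * T | mS] ω := by
  have hWc ω : c < W ω := (hW ω).1
  have hκ₀ := condExp_mul_ae_eq_condExp_mul_condExp hmS hmX hWm.inv.stronglyMeasurable
    (integrable_inv_mul_of_lt hmX hWm hc hWc hT) hT
  have hρ : (fun _ ↦ c / (1 - c)) ≤ᵐ[μ] W⁻¹ * μ[T | mX] := by
    filter_upwards [hπ] with ω hω
    rw [Pi.mul_apply, Pi.inv_apply, inv_mul_eq_div]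
    exact div_le_div₀ (hc.le.trans hω.le) hω.le (hc.trans (hWc ω)) (hW ω).2.le
  have hρS := condExp_mono (m := mS) (integrable_const _)
    (integrable_inv_mul_of_lt hmX hWm hc hWc integrable_condExp) hρ
  rw [condExp_const (hmS.trans hmX)] at hρS
  filter_upwards [hκ₀, hρS] with ω hκ₀ω hρSω
  exact hκ₀ω ▸ hρSω

theorem condExp_inv_mul_mul_ae_eq (hmS : mS ≤ mX) (hmX : mX ≤ mΩ) (hWm : Measurable[mX] W)
    (hc : 0 < c) (hW : ∀ ω, c < W ω) (hT : Integrable T μ) (hTY : Integrable (T * Y) μ)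
    (hindep : μ[T * Y | mX] =ᵐ[μ] μ[T | mX] * μ[Y | mX])
    (hdr : W =ᵐ[μ] μ[T | mX] ∨ μ[Y | mS] =ᵐ[μ] μ[Y | mX]) :
    μ[W⁻¹ * T * Y | mS] =ᵐ[μ] μ[W⁻¹ * T | mS] * μ[Y | mS] := by
  set ρ := W⁻¹ * μ[T | mX]
  have hWinv : StronglyMeasurable[mX] W⁻¹ := hWm.inv.stronglyMeasurable
  have hρY : W⁻¹ * μ[T * Y | mX] =ᵐ[μ] ρ * μ[Y | mX] := by
    filter_upwards [hindep] with ω hω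
    simp only [ρ, Pi.mul_apply, hω]
    ring
  have hκ₀ : μ[W⁻¹ * T | mS] =ᵐ[μ] μ[ρ | mS] := condExp_mul_ae_eq_condExp_mul_condExp hmS hmX
    hWinv (integrable_inv_mul_of_lt hmX hWm hc hW hT) hT
  have hκ₁ : μ[W⁻¹ * T * Y | mS] =ᵐ[μ] μ[ρ * μ[Y | mX] | mS] := by
    rw [mul_assoc]
    exact (condExp_mul_ae_eq_condExp_mul_condExp hmS hmX hWinv
      (integrable_inv_mul_of_lt hmX hWm hc hW hTY) hTY).trans (condExp_congr_ae hρY)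
  have hdr' : ρ =ᵐ[μ] 1 ∨ μ[Y | mS] =ᵐ[μ] μ[Y | mX] := hdr.imp_left fun h ↦ by
    filter_upwards [h] with ω hω
    simp [ρ, ← hω, (hc.trans (hW ω)).ne']
  refine hκ₁.trans ((condExp_mul_condExp_ae_eq_of_or hmS hmX
    (integrable_inv_mul_of_lt hmX hWm hc hW integrable_condExp)
    ((integrable_inv_mul_of_lt hmX hWm hc hW integrable_condExp).congr hρY) hdr').trans ?_)
  filter_upwards [hκ₀] with ω hω
  rw [Pi.mul_apply, Pi.mul_apply, hω]

end InverseProbabilityWeighting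

theorem kernel_target_double_robustness_ate
    {Ω : Type*} [MeasurableSpace Ω] [StandardBorelSpace Ω]
    (μ : Measure Ω) [IsProbabilityMeasure μ]
    {𝒳 : Type*} [MeasurableSpace 𝒳] {𝒮 : Type*} [MeasurableSpace 𝒮]
    (Y T : Ω → ℝ) (X : Ω → 𝒳)
    (hY : Measurable Y) (hT : Measurable T) (hX : Measurable X)
    -- Y is square integrable
    (hYsq : MemLp Y 2 μ)
    -- T is a binary treatment indicator
    (hT01 : ∀ ω, T ω = 0 ∨ T ω = 1)
    -- unconfoundedness: T ⫫ Y | X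
    (hunconf : CondIndepFun (MeasurableSpace.comap X inferInstance) hX.comap_le T Y μ)
    -- positivity of the propensity score π(X) := E[T | X]
    (c : ℝ) (hc : c ∈ Set.Ioo (0 : ℝ) 1)
    (hpos : ∀ᵐ ω ∂μ,
      (μ[T | MeasurableSpace.comap X inferInstance]) ω ∈ Set.Ioo c (1 - c))
    -- the measurable transformation S := g(X)
    (g : 𝒳 → 𝒮) (hg : Measurable g)
    -- the working propensity score π*
    (πs : 𝒳 → ℝ) (hπs : Measurable πs)
    (hπsRange : ∀ x, πs x ∈ Set.Ioo c (1 - c))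
    -- double robustness: either π* = π a.s. or E[Y | σ(S)] = E[Y | σ(X)] a.s.
    (hdr : ((fun ω => πs (X ω)) =ᵐ[μ] μ[T | MeasurableSpace.comap X inferInstance])
        ∨ (μ[Y | MeasurableSpace.comap (fun ω => g (X ω)) inferInstance]
            =ᵐ[μ] μ[Y | MeasurableSpace.comap X inferInstance])) :
    -- κ₀(S) is a.s. bounded away from zero
    (∃ δ : ℝ, 0 < δ ∧ ∀ᵐ ω ∂μ,
      δ ≤ (μ[fun ω' => (πs (X ω'))⁻¹ * T ω' * (Y ω') ^ (0 : ℕ) |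
            MeasurableSpace.comap (fun ω' => g (X ω')) inferInstance]) ω)
    -- and κ₁(S)/κ₀(S) = E[Y | σ(S)] a.s.
    ∧ (fun ω =>
        (μ[fun ω' => (πs (X ω'))⁻¹ * T ω' * (Y ω') ^ (1 : ℕ) |
            MeasurableSpace.comap (fun ω' => g (X ω')) inferInstance]) ω
        / (μ[fun ω' => (πs (X ω'))⁻¹ * T ω' * (Y ω') ^ (0 : ℕ) |
            MeasurableSpace.comap (fun ω' => g (X ω')) inferInstance]) ω)
      =ᵐ[μ] μ[Y | MeasurableSpace.comap (fun ω => g (X ω)) inferInstance] := by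
  simp only [pow_zero, pow_one, mul_one]
  have hmS : MeasurableSpace.comap (fun ω ↦ g (X ω)) inferInstance
      ≤ MeasurableSpace.comap X inferInstance := by
    rw [← Function.comp_def, ← MeasurableSpace.comap_comp]
    exact MeasurableSpace.comap_mono hg.comap_le
  have hWm : Measurable[MeasurableSpace.comap X inferInstance] fun ω ↦ πs (X ω) :=
    hπs.comp (comap_measurable X)
  have hW ω : πs (X ω) ∈ Set.Ioo c (1 - c) := hπsRange (X ω)
  have hTbound : ∀ᵐ ω ∂μ, ‖T ω‖ ≤ 1 :=
    Eventually.of_forall fun ω ↦ by rcases hT01 ω with h | h <;> simp [h]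
  have hTint : Integrable T μ := .of_bound hT.aestronglyMeasurable 1 hTbound
  have hYint : Integrable Y μ := hYsq.integrable one_le_two
  have hTYint : Integrable (T * Y) μ := hYint.bdd_mul hT.aestronglyMeasurable hTbound
  have hκ₀ := le_condExp_inv_mul hmS hX.comap_le hWm hc.1 hW hTint (hpos.mono fun _ h ↦ h.1)
  have hκ₁ := condExp_inv_mul_mul_ae_eq hmS hX.comap_le hWm hc.1 (fun ω ↦ (hW ω).1) hTint
    hTYint (hunconf.condExp_mul_ae_eq_s14 hT hY hTint hYint hTYint) hdr
  have hδ : 0 < c / (1 - c) := div_pos hc.1 (sub_pos.2 hc.2)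
  refine ⟨⟨c / (1 - c), hδ, hκ₀⟩, ?_⟩
  filter_upwards [hκ₀, hκ₁] with ω hκ₀ω hκ₁ω
  exact (congrArg (· / _) hκ₁ω).trans (mul_div_cancel_left₀ _ (hδ.trans_le hκ₀ω).ne')
end

section
/- (Double robustness of the kernel-smoothing target for the QTE) Let S := g(X) for a measurable transformation g, let π*: 𝒳 → (c, 1−c) be measurable, fix θ ∈ ℝ, and define φ_t(S,θ) := E[π*(X)^{−1}T(ψ(Y,θ))^t | σ(S)] for t = 0,1 (so φ₀ does not depend on θ). If either π*(X) = π(X) almost surely or E[ψ(Y,θ) | σ(S)] = E[ψ(Y,θ) | σ(X)] almost surely (but not necessarily both), then φ₀(S) is almost surely bounded away from zero and φ₁(S,θ)/φ₀(S) = E[ψ(Y,θ) | σ(S)] almost surely. -/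
/-!
Write `w := π*(X)⁻¹`, `p := E[T | X]` and `q := E[ψ | X]`. Since `w` is `σ(X)`-measurable, the
tower property gives `φ₀ = E[w p | S]` and `φ₁ = E[w E[Tψ | X] | S]`, and unconfoundedness of the
binary `T` factors `E[Tψ | X] = p q`. If `π* = π`, then `w p = 1`, so `φ₀ = 1` and
`φ₁ = E[q | S] = E[ψ | S]`. If instead `q = E[ψ | S]`, then `q` is `σ(S)`-measurable and pulls out:
`φ₁ = q E[w p | S] = E[ψ | S] φ₀`. Finally `φ₀ ≥ c` because `w ≥ 1` and `p > c`.
-/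

open MeasureTheory ProbabilityTheory

lemma inv_mem_Icc_of_mem_Ioo {a c : ℝ} (hc : 0 < c) (ha : a ∈ Set.Ioo c (1 - c)) :
    a⁻¹ ∈ Set.Icc 1 c⁻¹ :=
  ⟨one_le_inv_iff₀.mpr ⟨hc.trans ha.1, by linarith [ha.2]⟩, inv_anti₀ hc ha.1.le⟩

section CondExp

variable {Ω : Type*} {m' m mΩ : MeasurableSpace Ω} {μ : Measure Ω} {w f T ψ : Ω → ℝ} {C : ℝ}

lemma integrable_mul_condExp (hm : m ≤ mΩ) (hw : StronglyMeasurable[m] w)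
    (hwC : ∀ᵐ ω ∂μ, ‖w ω‖ ≤ C) : Integrable (w * μ[f | m]) μ :=
  integrable_condExp.bdd_mul (hw.mono hm).aestronglyMeasurable hwC

variable [IsFiniteMeasure μ]

lemma ae_const_le_condExp (hm' : m' ≤ mΩ) {δ : ℝ} (hf : Integrable f μ)
    (hδf : ∀ᵐ ω ∂μ, δ ≤ f ω) : ∀ᵐ ω ∂μ, δ ≤ μ[f | m'] ω := by
  filter_upwards [condExp_mono (m := m') (integrable_const δ) hf hδf] with ω hω
  rwa [condExp_const hm'] at hω

lemma condExp_mul_sub_const_of_condExp_mul (hm : m ≤ mΩ) {f h : Ω → ℝ} (b : ℝ)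
    (hf : Integrable f μ) (hh : Integrable h μ) (hfh : Integrable (f * h) μ)
    (hprod : μ[f * h | m] =ᵐ[μ] μ[f | m] * μ[h | m]) :
    μ[f * (h - fun _ => b) | m] =ᵐ[μ] μ[f | m] * μ[h - fun _ => b | m] := by
  have hsplit : f * (h - fun _ => b) = f * h - b • f := by
    ext ω; simp only [Pi.mul_apply, Pi.sub_apply, Pi.smul_apply, smul_eq_mul]; ring
  rw [hsplit]
  filter_upwards [condExp_sub hfh (hf.smul b) m, condExp_smul b f m,
    condExp_sub hh (integrable_const b) m, hprod] with ω h₁ h₂ h₃ h₄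
  simp only [Pi.sub_apply, Pi.mul_apply, Pi.smul_apply, smul_eq_mul] at h₁ h₂ h₃ h₄ ⊢
  rw [h₁, h₂, h₃, h₄, condExp_const hm]
  ring

lemma condExp_mul_indicator_sub_const_of_condIndepFun [StandardBorelSpace Ω] {hm : m ≤ mΩ}
    {Y : Ω → ℝ} (hT : Measurable T) (hY : Measurable Y) (hT01 : ∀ ω, T ω = 0 ∨ T ω = 1)
    (hTY : CondIndepFun m hm T Y μ) {t : Set ℝ} (ht : MeasurableSet t) (b : ℝ) :
    μ[T * ((Y ⁻¹' t).indicator 1 - fun _ => b) | m]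
      =ᵐ[μ] μ[T | m] * μ[(Y ⁻¹' t).indicator 1 - fun _ => b | m] := by
  have hT_eq : T = (T ⁻¹' {1}).indicator 1 := by
    ext ω; rcases hT01 ω with h | h <;> simp [h]
  have hA := hT (measurableSet_singleton 1)
  have hB := hY ht
  rw [hT_eq]
  refine condExp_mul_sub_const_of_condExp_mul hm b ((integrable_const 1).indicator hA)
    ((integrable_const 1).indicator hB) ?_ ?_
  · rw [← Set.inter_indicator_one]
    exact (integrable_const 1).indicator (hA.inter hB)
  · rw [← Set.inter_indicator_one]
    exact (condIndepFun_iff_condExp_inter_preimage_eq_mul hT hY).mp hTY _ _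
      (measurableSet_singleton 1) ht

lemma condExp_mul_eq_condExp_mul_condExp_of_le (hm'm : m' ≤ m) (hm : m ≤ mΩ)
    (hw : StronglyMeasurable[m] w) (hwC : ∀ᵐ ω ∂μ, ‖w ω‖ ≤ C) (hf : Integrable f μ) :
    μ[w * f | m'] =ᵐ[μ] μ[w * μ[f | m] | m'] :=
  (condExp_condExp_of_le hm'm hm).symm.trans
    (condExp_congr_ae (condExp_stronglyMeasurable_mul_of_bound hm hw hf C hwC))

lemma ae_le_condExp_mul_of_le (hm'm : m' ≤ m) (hm : m ≤ mΩ) (hw : StronglyMeasurable[m] w)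
    (hwC : ∀ᵐ ω ∂μ, ‖w ω‖ ≤ C) (hf : Integrable f μ) {δ : ℝ}
    (hδ : ∀ᵐ ω ∂μ, δ ≤ w ω * μ[f | m] ω) : ∀ᵐ ω ∂μ, δ ≤ μ[w * f | m'] ω := by
  filter_upwards [condExp_mul_eq_condExp_mul_condExp_of_le hm'm hm hw hwC hf,
    ae_const_le_condExp (hm'm.trans hm) (integrable_mul_condExp hm hw hwC) hδ] with ω h₁ h₂
  rwa [h₁]

lemma condExp_mul_mul_of_mul_condExp_eq_one (hm'm : m' ≤ m) (hm : m ≤ mΩ)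
    (hw : StronglyMeasurable[m] w) (hwC : ∀ᵐ ω ∂μ, ‖w ω‖ ≤ C) (hT : Integrable T μ)
    (hTψ : Integrable (T * ψ) μ) (hfact : μ[T * ψ | m] =ᵐ[μ] μ[T | m] * μ[ψ | m])
    (hwp : w * μ[T | m] =ᵐ[μ] 1) :
    μ[w * T * ψ | m'] =ᵐ[μ] μ[ψ | m'] * μ[w * T | m'] := by
  rw [mul_assoc]
  have hφ₀ : μ[w * T | m'] =ᵐ[μ] 1 := by
    refine (condExp_mul_eq_condExp_mul_condExp_of_le hm'm hm hw hwC hT).trans ?_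
    refine (condExp_congr_ae hwp).trans ?_
    exact (condExp_const (hm'm.trans hm) (1 : ℝ)).eventuallyEq
  have hφ₁ : μ[w * (T * ψ) | m'] =ᵐ[μ] μ[ψ | m'] := by
    refine (condExp_mul_eq_condExp_mul_condExp_of_le hm'm hm hw hwC hTψ).trans ?_
    refine (condExp_congr_ae ?_).trans (condExp_condExp_of_le hm'm hm)
    filter_upwards [hfact, hwp] with ω h₁ h₂
    simp only [Pi.mul_apply, Pi.one_apply] at h₁ h₂ ⊢
    rw [h₁, ← mul_assoc, h₂, one_mul]
  filter_upwards [hφ₀, hφ₁] with ω h₀ h₁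
  simp only [Pi.mul_apply, Pi.one_apply] at h₀ ⊢
  rw [h₀, h₁, mul_one]

lemma condExp_mul_mul_of_condExp_eq (hm'm : m' ≤ m) (hm : m ≤ mΩ)
    (hw : StronglyMeasurable[m] w) (hwC : ∀ᵐ ω ∂μ, ‖w ω‖ ≤ C) (hT : Integrable T μ)
    (hTψ : Integrable (T * ψ) μ) (hfact : μ[T * ψ | m] =ᵐ[μ] μ[T | m] * μ[ψ | m])
    (hq : μ[ψ | m'] =ᵐ[μ] μ[ψ | m]) :
    μ[w * T * ψ | m'] =ᵐ[μ] μ[ψ | m'] * μ[w * T | m'] := by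
  rw [mul_assoc]
  have hswap : w * μ[T * ψ | m] =ᵐ[μ] μ[ψ | m'] * (w * μ[T | m]) := by
    filter_upwards [hfact, hq] with ω h₁ h₂
    simp only [Pi.mul_apply] at h₁ h₂ ⊢
    rw [h₁, h₂]; ring
  calc μ[w * (T * ψ) | m'] =ᵐ[μ] μ[w * μ[T * ψ | m] | m'] :=
        condExp_mul_eq_condExp_mul_condExp_of_le hm'm hm hw hwC hTψ
    _ =ᵐ[μ] μ[μ[ψ | m'] * (w * μ[T | m]) | m'] := condExp_congr_ae hswap
    _ =ᵐ[μ] μ[ψ | m'] * μ[w * μ[T | m] | m'] :=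
        condExp_mul_of_stronglyMeasurable_left stronglyMeasurable_condExp
          ((integrable_mul_condExp hm hw hwC).congr hswap) (integrable_mul_condExp hm hw hwC)
    _ =ᵐ[μ] μ[ψ | m'] * μ[w * T | m'] :=
        (condExp_mul_eq_condExp_mul_condExp_of_le hm'm hm hw hwC hT).symm.mul_left

lemma condExp_mul_mul_div_condExp_mul (hm'm : m' ≤ m) (hm : m ≤ mΩ)
    (hw : StronglyMeasurable[m] w) (hwC : ∀ᵐ ω ∂μ, ‖w ω‖ ≤ C) (hT : Integrable T μ)
    (hTψ : Integrable (T * ψ) μ) (hfact : μ[T * ψ | m] =ᵐ[μ] μ[T | m] * μ[ψ | m])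
    (hφ₀ : ∀ᵐ ω ∂μ, μ[w * T | m'] ω ≠ 0)
    (hdr : w * μ[T | m] =ᵐ[μ] 1 ∨ μ[ψ | m'] =ᵐ[μ] μ[ψ | m]) :
    μ[w * T * ψ | m'] / μ[w * T | m'] =ᵐ[μ] μ[ψ | m'] := by
  have hφ₁ : μ[w * T * ψ | m'] =ᵐ[μ] μ[ψ | m'] * μ[w * T | m'] := by
    rcases hdr with hwp | hq
    · exact condExp_mul_mul_of_mul_condExp_eq_one hm'm hm hw hwC hT hTψ hfact hwp
    · exact condExp_mul_mul_of_condExp_eq hm'm hm hw hwC hT hTψ hfact hq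
  filter_upwards [hφ₀, hφ₁] with ω h₀ h₁
  rw [Pi.div_apply, h₁, Pi.mul_apply, mul_div_cancel_right₀ _ h₀]

end CondExp

theorem kernel_target_double_robustness_qte_general
    {Ω : Type*} [MeasurableSpace Ω] [StandardBorelSpace Ω]
    (μ : Measure Ω) [IsProbabilityMeasure μ]
    {𝒳 : Type*} [MeasurableSpace 𝒳] {𝒮 : Type*} [MeasurableSpace 𝒮]
    (Y T : Ω → ℝ) (X : Ω → 𝒳)
    (hY : Measurable Y) (hT : Measurable T) (hX : Measurable X)
    -- T is a binary treatment indicator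
    (hT01 : ∀ ω, T ω = 0 ∨ T ω = 1)
    -- unconfoundedness: T ⫫ Y | X
    (hunconf : CondIndepFun (MeasurableSpace.comap X inferInstance) hX.comap_le T Y μ)
    -- positivity of the propensity score π(X) := E[T | X]
    (c : ℝ) (hc : c ∈ Set.Ioo (0 : ℝ) 1)
    (hpos : ∀ᵐ ω ∂μ,
      (μ[T | MeasurableSpace.comap X inferInstance]) ω ∈ Set.Ioo c (1 - c))
    -- quantile level and a fixed θ
    (τ : ℝ) (θ : ℝ)
    -- the measurable transformation S := g(X)
    (g : 𝒳 → 𝒮) (hg : Measurable g)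
    -- the working propensity score π*
    (πs : 𝒳 → ℝ) (hπs : Measurable πs)
    (hπsRange : ∀ x, πs x ∈ Set.Ioo c (1 - c))
    -- double robustness:
    -- either π* = π a.s. or E[ψ(Y,θ) | σ(S)] = E[ψ(Y,θ) | σ(X)] a.s.
    (hdr : ((fun ω => πs (X ω)) =ᵐ[μ] μ[T | MeasurableSpace.comap X inferInstance])
        ∨ (μ[fun ω => (if Y ω < θ then (1 : ℝ) else 0) - τ |
              MeasurableSpace.comap (fun ω => g (X ω)) inferInstance]
            =ᵐ[μ] μ[fun ω => (if Y ω < θ then (1 : ℝ) else 0) - τ |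
              MeasurableSpace.comap X inferInstance])) :
    -- φ₀(S) is a.s. bounded away from zero
    (∃ δ : ℝ, 0 < δ ∧ ∀ᵐ ω ∂μ,
      δ ≤ (μ[fun ω' => (πs (X ω'))⁻¹ * T ω'
              * ((if Y ω' < θ then (1 : ℝ) else 0) - τ) ^ (0 : ℕ) |
            MeasurableSpace.comap (fun ω' => g (X ω')) inferInstance]) ω)
    -- and φ₁(S,θ)/φ₀(S) = E[ψ(Y,θ) | σ(S)] a.s.
    ∧ (fun ω =>
        (μ[fun ω' => (πs (X ω'))⁻¹ * T ω'
              * ((if Y ω' < θ then (1 : ℝ) else 0) - τ) ^ (1 : ℕ) |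
            MeasurableSpace.comap (fun ω' => g (X ω')) inferInstance]) ω
        / (μ[fun ω' => (πs (X ω'))⁻¹ * T ω'
              * ((if Y ω' < θ then (1 : ℝ) else 0) - τ) ^ (0 : ℕ) |
            MeasurableSpace.comap (fun ω' => g (X ω')) inferInstance]) ω)
      =ᵐ[μ] μ[fun ω => (if Y ω < θ then (1 : ℝ) else 0) - τ |
              MeasurableSpace.comap (fun ω => g (X ω)) inferInstance] := by
  set mX : MeasurableSpace Ω := MeasurableSpace.comap X inferInstance
  set mS : MeasurableSpace Ω := MeasurableSpace.comap (fun ω => g (X ω)) inferInstance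
  set w : Ω → ℝ := fun ω => (πs (X ω))⁻¹
  set ψ : Ω → ℝ := (Y ⁻¹' Set.Iio θ).indicator 1 - fun _ => τ
  have hψ : ∀ ω, (if Y ω < θ then (1 : ℝ) else 0) - τ = ψ ω := fun ω => by
    by_cases h : Y ω < θ <;> simp [ψ, h]
  simp only [pow_zero, mul_one, pow_one, hψ] at hdr ⊢
  have hSX : mS ≤ mX := (hg.comp (comap_measurable X)).comap_le
  have hw : StronglyMeasurable[mX] w := (hπs.comp (comap_measurable X)).inv.stronglyMeasurable
  have hw_mem : ∀ ω, w ω ∈ Set.Icc 1 c⁻¹ := fun ω => inv_mem_Icc_of_mem_Ioo hc.1 (hπsRange _)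
  have hw_le : ∀ᵐ ω ∂μ, ‖w ω‖ ≤ c⁻¹ := ae_of_all _ fun ω => by
    rw [Real.norm_of_nonneg (zero_le_one.trans (hw_mem ω).1)]; exact (hw_mem ω).2
  have hT_le : ∀ᵐ ω ∂μ, ‖T ω‖ ≤ 1 := ae_of_all _ fun ω => by rcases hT01 ω with h | h <;> simp [h]
  have hT_int : Integrable T μ := .of_bound hT.aestronglyMeasurable 1 hT_le
  have hTψ_int : Integrable (T * ψ) μ :=
    (((integrable_const 1).indicator (hY measurableSet_Iio)).sub (integrable_const τ)).bdd_mul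
      hT.aestronglyMeasurable hT_le
  have hfact : μ[T * ψ | mX] =ᵐ[μ] μ[T | mX] * μ[ψ | mX] :=
    condExp_mul_indicator_sub_const_of_condIndepFun hT hY hT01 hunconf measurableSet_Iio τ
  have hφ₀ : ∀ᵐ ω ∂μ, c ≤ μ[w * T | mS] ω := by
    refine ae_le_condExp_mul_of_le hSX hX.comap_le hw hw_le hT_int ?_
    filter_upwards [hpos] with ω hω
    nlinarith [(hw_mem ω).1, hω.1, hc.1]
  refine ⟨⟨c, hc.1, hφ₀⟩, condExp_mul_mul_div_condExp_mul hSX hX.comap_le hw hw_le hT_int hTψ_int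
    hfact (hφ₀.mono fun ω h => (hc.1.trans_le h).ne') (hdr.imp (fun hπ => ?_) id)⟩
  filter_upwards [hπ] with ω hω
  change (πs (X ω))⁻¹ * μ[T | mX] ω = 1
  rw [← hω]
  exact inv_mul_cancel₀ (hc.1.trans (hπsRange (X ω)).1).ne'

theorem kernel_target_double_robustness_qte
    {Ω : Type*} [MeasurableSpace Ω] [StandardBorelSpace Ω]
    (μ : Measure Ω) [IsProbabilityMeasure μ]
    {𝒳 : Type*} [MeasurableSpace 𝒳] {𝒮 : Type*} [MeasurableSpace 𝒮]
    (Y T : Ω → ℝ) (X : Ω → 𝒳)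
    (hY : Measurable Y) (hT : Measurable T) (hX : Measurable X)
    -- T is a binary treatment indicator
    (hT01 : ∀ ω, T ω = 0 ∨ T ω = 1)
    -- unconfoundedness: T ⫫ Y | X
    (hunconf : CondIndepFun (MeasurableSpace.comap X inferInstance) hX.comap_le T Y μ)
    -- positivity of the propensity score π(X) := E[T | X]
    (c : ℝ) (hc : c ∈ Set.Ioo (0 : ℝ) 1)
    (hpos : ∀ᵐ ω ∂μ,
      (μ[T | MeasurableSpace.comap X inferInstance]) ω ∈ Set.Ioo c (1 - c))
    -- quantile level and a fixed θ
    (τ : ℝ) (hτ : τ ∈ Set.Ioo (0 : ℝ) 1) (θ : ℝ)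
    -- the measurable transformation S := g(X)
    (g : 𝒳 → 𝒮) (hg : Measurable g)
    -- the working propensity score π*
    (πs : 𝒳 → ℝ) (hπs : Measurable πs)
    (hπsRange : ∀ x, πs x ∈ Set.Ioo c (1 - c))
    -- double robustness:
    -- either π* = π a.s. or E[ψ(Y,θ) | σ(S)] = E[ψ(Y,θ) | σ(X)] a.s.
    (hdr : ((fun ω => πs (X ω)) =ᵐ[μ] μ[T | MeasurableSpace.comap X inferInstance])
        ∨ (μ[fun ω => (if Y ω < θ then (1 : ℝ) else 0) - τ |
              MeasurableSpace.comap (fun ω => g (X ω)) inferInstance]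
            =ᵐ[μ] μ[fun ω => (if Y ω < θ then (1 : ℝ) else 0) - τ |
              MeasurableSpace.comap X inferInstance])) :
    -- φ₀(S) is a.s. bounded away from zero
    (∃ δ : ℝ, 0 < δ ∧ ∀ᵐ ω ∂μ,
      δ ≤ (μ[fun ω' => (πs (X ω'))⁻¹ * T ω'
              * ((if Y ω' < θ then (1 : ℝ) else 0) - τ) ^ (0 : ℕ) |
            MeasurableSpace.comap (fun ω' => g (X ω')) inferInstance]) ω)
    -- and φ₁(S,θ)/φ₀(S) = E[ψ(Y,θ) | σ(S)] a.s.
    ∧ (fun ω =>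
        (μ[fun ω' => (πs (X ω'))⁻¹ * T ω'
              * ((if Y ω' < θ then (1 : ℝ) else 0) - τ) ^ (1 : ℕ) |
            MeasurableSpace.comap (fun ω' => g (X ω')) inferInstance]) ω
        / (μ[fun ω' => (πs (X ω'))⁻¹ * T ω'
              * ((if Y ω' < θ then (1 : ℝ) else 0) - τ) ^ (0 : ℕ) |
            MeasurableSpace.comap (fun ω' => g (X ω')) inferInstance]) ω)
      =ᵐ[μ] μ[fun ω => (if Y ω < θ then (1 : ℝ) else 0) - τ |
              MeasurableSpace.comap (fun ω => g (X ω)) inferInstance] :=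
  kernel_target_double_robustness_qte_general μ Y T X hY hT hX hT01 hunconf c hc hpos τ θ g hg πs
    hπs hπsRange hdr
end
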